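/- arXiv:1306.6290 — 7 statements merged into one kernel-verified Lean document; each statement's English description precedes it below -/
import Mathlib

section
/- Let X be a real Banach space, V ⊆ X a dense linear subspace, C ⊆ V a cone, and p : V → C a function such that p(v) − v ∈ C for all v ∈ V and such that p maps Cauchy sequences in V to Cauchy sequences. Then, denoting by C̄ the closure of C in X, every element of X is the difference of two elements of C̄; that is, the closed cone C̄ is generating in X. -/
/-- Let `X` be a real Banach space, `V ⊆ X` a dense linear subspace,
`C ⊆ V` a cone, and `p : V → C` a function such that `p v - v ∈ C` for all `v ∈ V`
and which maps Cauchy sequences in `V` to Cauchy sequences. Then the closed cone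
`closure C` is generating in `X`: every element of `X` is a difference of two
elements of `closure C`. -/
theorem stmt2
    {X : Type*} [NormedAddCommGroup X] [NormedSpace ℝ X] [CompleteSpace X]
    (V : Submodule ℝ X) (hV : Dense (V : Set X))
    (C : Set X) (hCV : C ⊆ (V : Set X))
    (hC_add : ∀ x ∈ C, ∀ y ∈ C, x + y ∈ C)
    (hC_smul : ∀ (t : ℝ), 0 ≤ t → ∀ x ∈ C, t • x ∈ C)
    (p : X → X)
    (hp_mem : ∀ v ∈ V, p v ∈ C)
    (hp_dom : ∀ v ∈ V, p v - v ∈ C)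
    (hp_cauchy : ∀ u : ℕ → X, (∀ n, u n ∈ V) → CauchySeq u → CauchySeq (p ∘ u)) :
    ∀ x : X, ∃ a ∈ closure C, ∃ b ∈ closure C, x = a - b := by
  intro x
  obtain ⟨u, hu_mem, hu_tendsto⟩ := mem_closure_iff_seq_limit.mp (hV x)
  have hu_cauchy : CauchySeq u := hu_tendsto.cauchySeq
  have hpu : CauchySeq (p ∘ u) := hp_cauchy u hu_mem hu_cauchy
  obtain ⟨a, ha⟩ := cauchySeq_tendsto_of_complete hpu
  refine ⟨a, ?_, a - x, ?_, (sub_sub_cancel a x).symm⟩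
  · exact mem_closure_of_tendsto ha
      (Filter.Eventually.of_forall fun n => hp_mem (u n) (hu_mem n))
  · have : Filter.Tendsto (fun n => p (u n) - u n) Filter.atTop (nhds (a - x)) :=
      ha.sub hu_tendsto
    exact mem_closure_of_tendsto this
      (Filter.Eventually.of_forall fun n => hp_dom (u n) (hu_mem n))
end

section
/- Let X be a pre-ordered Banach space whose closed cone X₊ is generating (X = X₊ − X₊). Then there exist a constant α > 0 and continuous maps p, m : X → X₊ that are positively homogeneous (p(t•x) = t•p(x) and m(t•x) = t•m(x) for all t ≥ 0 and x ∈ X) such that x = p(x) − m(x) and ‖p(x)‖ + ‖m(x)‖ ≤ α‖x‖ for all x ∈ X. -/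
/-!
For the closed generating cone `C`, Baire's theorem makes the closed, convex, symmetric and
absorbing set `closure (C ∩ B - C ∩ B)` (`B` the closed unit ball) a neighbourhood of `0`, and the
iteration from the proof of the open mapping theorem removes the closure, using that `C` is closed
and `X` complete. This is Andô's theorem: there is `K` with every `x = a - b`, `a, b ∈ C`,
`‖a‖, ‖b‖ ≤ K ‖x‖`. Moving `a` by such a decomposition of `x' - x` shows that
`x ↦ {a ∈ C | a - x ∈ C, ‖a‖ < K ‖x‖ + 1}` is lower hemicontinuous, so Michael's selection theorem
gives a continuous `f` with `f x ∈ C`, `f x - x ∈ C` and `‖f x‖ ≤ K ‖x‖ + 1`. Finally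
`p x = ‖x‖ • f (‖x‖⁻¹ • x)` and `m x = p x - x` are positively homogeneous, and continuous at `0`
because `f` is bounded on the unit sphere.
-/

open Filter Topology Set Metric
open scoped Pointwise

theorem exists_seq_of_forall_exists_succ {α : Type*} {P : ℕ → α → Prop} {R : ℕ → α → α → Prop}
    {a₀ : α} (h₀ : P 0 a₀) (h : ∀ n a, P n a → ∃ b, P (n + 1) b ∧ R n a b) :
    ∃ u : ℕ → α, u 0 = a₀ ∧ ∀ n, P n (u n) ∧ R n (u n) (u (n + 1)) := by
  choose! next hnext using h
  let u : ℕ → α := fun n => Nat.rec a₀ next n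
  have hP : ∀ n, P n (u n) := fun n => by
    induction n with
    | zero => exact h₀
    | succ n ih => exact (hnext n (u n) ih).1
  exact ⟨u, rfl, fun n => ⟨hP n, (hnext n (u n) (hP n)).2⟩⟩

theorem exists_continuous_tendsto_of_dist_le_geometric_two {T E : Type*} [TopologicalSpace T]
    [PseudoMetricSpace E] [CompleteSpace E] {u : ℕ → T → E} (hu : ∀ n, Continuous (u n)) {C : ℝ}
    (hdist : ∀ n x, dist (u n x) (u (n + 1) x) ≤ C / 2 / 2 ^ n) :
    ∃ f : T → E, Continuous f ∧ ∀ x, Tendsto (u · x) atTop (𝓝 (f x)) := by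
  choose f hf using fun x =>
    cauchySeq_tendsto_of_complete (cauchySeq_of_le_geometric_two (hdist · x))
  refine ⟨f, TendstoUniformly.continuous ?_ (.of_forall (f := (atTop : Filter ℕ)) hu), hf⟩
  rw [Metric.tendstoUniformly_iff]
  intro ε hε
  have hC : Tendsto (fun n : ℕ => C / 2 ^ n) atTop (𝓝 0) :=
    tendsto_const_nhds.div_atTop (tendsto_pow_atTop_atTop_of_one_lt one_lt_two)
  filter_upwards [hC.eventually (gt_mem_nhds hε)] with n hn x
  rw [dist_comm]
  exact (dist_le_of_le_geometric_two_of_tendsto (hdist · x) (hf x) n).trans_lt hn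

section Selection

variable {T E : Type*} [TopologicalSpace T] [NormalSpace T] [ParacompactSpace T]
  [NormedAddCommGroup E] [NormedSpace ℝ E] {F : T → Set E}

theorem LowerHemicontinuous.exists_continuous_mem_thickening (hF : LowerHemicontinuous F)
    (hne : ∀ x, (F x).Nonempty) (hconv : ∀ x, Convex ℝ (F x)) {ε : ℝ} (hε : 0 < ε) :
    ∃ g : T → E, Continuous g ∧ ∀ x, g x ∈ thickening ε (F x) := by
  obtain ⟨g, hg⟩ := exists_continuous_forall_mem_convex_of_local_const
    (fun x => (hconv x).thickening ε) fun x => by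
      obtain ⟨c, hc⟩ := hne x
      have hopen := lowerHemicontinuous_iff_isOpen_inter_nonempty.1 hF _
        (isOpen_ball (x := c) (ε := ε))
      refine ⟨c, Eventually.mono (hopen.mem_nhds ⟨c, hc, mem_ball_self hε⟩) ?_⟩
      rintro y ⟨z, hz, hzc⟩
      exact mem_thickening_iff.2 ⟨z, hz, by rwa [dist_comm]⟩
  exact ⟨g, g.continuous, hg⟩

theorem LowerHemicontinuous.exists_continuous_mem_thickening_half (hF : LowerHemicontinuous F)
    (hconv : ∀ x, Convex ℝ (F x)) {g : T → E} (hg : Continuous g) {ε : ℝ} (hε : 0 < ε)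
    (hgF : ∀ x, g x ∈ thickening ε (F x)) :
    ∃ g' : T → E, Continuous g' ∧ (∀ x, g' x ∈ thickening (ε / 2) (F x)) ∧
      ∀ x, dist (g' x) (g x) < 2 * ε := by
  have hopen : HasOpenCGraph fun x => ball (g x) ε :=
    isOpen_lt (continuous_snd.dist (hg.comp continuous_fst)) continuous_const
  have hne : ∀ x, (F x ∩ ball (g x) ε).Nonempty := fun x => by
    obtain ⟨z, hz, hgz⟩ := mem_thickening_iff.1 (hgF x)
    exact ⟨z, hz, by rwa [mem_ball, dist_comm]⟩
  obtain ⟨g', hg', hg'F⟩ := (hF.inter_hasOpenCGraph hopen).exists_continuous_mem_thickening hne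
    (fun x => (hconv x).inter (convex_ball _ _)) (half_pos hε)
  refine ⟨g', hg', fun x => thickening_subset_of_subset _ inter_subset_left (hg'F x),
    fun x => ?_⟩
  obtain ⟨z, ⟨-, hz⟩, hg'z⟩ := mem_thickening_iff.1 (hg'F x)
  calc dist (g' x) (g x) ≤ dist (g' x) z + dist z (g x) := dist_triangle _ _ _
    _ < ε / 2 + ε := add_lt_add hg'z hz
    _ < 2 * ε := by linarith

theorem LowerHemicontinuous.exists_continuous_mem_closure [CompleteSpace E]
    (hF : LowerHemicontinuous F) (hne : ∀ x, (F x).Nonempty) (hconv : ∀ x, Convex ℝ (F x)) :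
    ∃ f : T → E, Continuous f ∧ ∀ x, f x ∈ closure (F x) := by
  obtain ⟨g₀, hg₀, hg₀F⟩ := hF.exists_continuous_mem_thickening hne hconv one_pos
  obtain ⟨u, -, hu⟩ := exists_seq_of_forall_exists_succ
    (P := fun n g => Continuous g ∧ ∀ x, g x ∈ thickening (1 / 2 ^ n) (F x))
    (R := fun n g g' => ∀ x, dist (g x) (g' x) ≤ 4 / 2 / 2 ^ n) ⟨hg₀, by simpa using hg₀F⟩
    fun n g ⟨hg, hgF⟩ => by
      obtain ⟨g', hg', hg'F, hdist⟩ :=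
        hF.exists_continuous_mem_thickening_half hconv hg (by positivity) hgF
      refine ⟨g', ⟨hg', fun x => ?_⟩, fun x => ?_⟩
      · rw [pow_succ, ← div_div]
        exact hg'F x
      · rw [dist_comm]
        exact (hdist x).le.trans_eq (by ring)
  obtain ⟨f, hf, hlim⟩ :=
    exists_continuous_tendsto_of_dist_le_geometric_two (fun n => (hu n).1.1) fun n => (hu n).2
  refine ⟨f, hf, fun x => ?_⟩
  have hdist_lt : ∀ n, infDist (u n x) (F x) < 1 / 2 ^ n := fun n =>
    (mem_thickening_iff_infDist_lt (hne x)).1 ((hu n).1.2 x)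
  have hinfDist : Tendsto (fun n => infDist (u n x) (F x)) atTop (𝓝 (infDist (f x) (F x))) :=
    ((continuous_infDist_pt _).tendsto _).comp (hlim x)
  have hbound : Tendsto (fun n : ℕ => (1 : ℝ) / 2 ^ n) atTop (𝓝 0) :=
    tendsto_const_nhds.div_atTop (tendsto_pow_atTop_atTop_of_one_lt one_lt_two)
  rw [mem_closure_iff_infDist_zero (hne x)]
  exact le_antisymm (le_of_tendsto_of_tendsto' hinfDist hbound fun n => (hdist_lt n).le)
    infDist_nonneg

end Selection

section Homogenize

variable {E F : Type*} [NormedAddCommGroup E] [NormedSpace ℝ E] [NormedAddCommGroup F]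
  [NormedSpace ℝ F]

/-- At `x = 0` this is `0 • f 0 = 0`, since `‖0‖⁻¹ = 0`. -/
noncomputable def homogenize (f : E → F) (x : E) : F := ‖x‖ • f (‖x‖⁻¹ • x)

theorem homogenize_smul (f : E → F) {t : ℝ} (ht : 0 ≤ t) (x : E) :
    homogenize f (t • x) = t • homogenize f x := by
  rcases ht.eq_or_lt with rfl | ht
  · simp [homogenize]
  rw [homogenize, homogenize, norm_smul, Real.norm_of_nonneg ht.le, mul_inv, smul_smul,
    mul_comm t⁻¹, mul_assoc, inv_mul_cancel₀ ht.ne', mul_one, mul_smul]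

theorem homogenize_sub_self (f : E → E) (x : E) :
    homogenize (fun y => f y - y) x = homogenize f x - x := by
  rcases eq_or_ne x 0 with rfl | hx
  · simp [homogenize]
  rw [homogenize, homogenize, smul_sub, smul_inv_smul₀ (norm_ne_zero_iff.2 hx)]

theorem norm_homogenize_le {f : E → F} {M : ℝ} (hM : ∀ y, ‖y‖ = 1 → ‖f y‖ ≤ M) (x : E) :
    ‖homogenize f x‖ ≤ M * ‖x‖ := by
  rcases eq_or_ne x 0 with rfl | hx
  · simp [homogenize]
  rw [homogenize, norm_smul, norm_norm, mul_comm]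
  exact mul_le_mul_of_nonneg_right (hM _ (norm_smul_inv_norm (𝕜 := ℝ) hx)) (norm_nonneg x)

theorem continuous_homogenize {f : E → F} (hf : Continuous f) {M : ℝ}
    (hM : ∀ y, ‖y‖ = 1 → ‖f y‖ ≤ M) : Continuous (homogenize f) := by
  refine continuous_iff_continuousAt.2 fun x => ?_
  rcases eq_or_ne x 0 with rfl | hx
  · rw [ContinuousAt, show homogenize f 0 = 0 by simp [homogenize]]
    refine squeeze_zero_norm (norm_homogenize_le hM) ?_
    simpa using (continuous_const.mul continuous_norm).tendsto (0 : E) (f := fun y => M * ‖y‖)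
  exact continuous_norm.continuousAt.smul (hf.continuousAt.comp
    ((continuous_norm.continuousAt.inv₀ (norm_ne_zero_iff.2 hx)).smul continuousAt_id))

end Homogenize

section Cone

variable {X : Type*} [NormedAddCommGroup X] [NormedSpace ℝ X]

theorem IsClosed.mem_nhds_zero_of_convex_of_absorbing [CompleteSpace X] {A : Set X}
    (hA : IsClosed A) (hconv : Convex ℝ A) (hneg : ∀ x ∈ A, -x ∈ A)
    (hcover : ∀ x, ∃ n : ℕ, x ∈ ((n : ℝ) + 1) • A) : A ∈ 𝓝 0 := by
  obtain ⟨n, hn⟩ := nonempty_interior_of_iUnion_of_closed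
    (fun n : ℕ => hA.smul₀ ((n : ℝ) + 1)) (eq_univ_of_forall fun x => mem_iUnion.2 (hcover x))
  rw [interior_smul₀ (by positivity)] at hn
  obtain ⟨e, he⟩ := Set.smul_set_nonempty.1 hn
  have he' : -e ∈ interior A := by
    refine mem_interior_iff_mem_nhds.2 (mem_of_superset ?_ fun y hy => neg_neg y ▸ hneg _ hy)
    exact continuous_neg.tendsto (-e) (by rw [neg_neg]; exact mem_interior_iff_mem_nhds.1 he)
  have hmid := hconv.interior he he' (by norm_num : (0 : ℝ) ≤ 1 / 2)
    (by norm_num : (0 : ℝ) ≤ 1 / 2) (by norm_num)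
  rw [smul_neg, add_neg_cancel] at hmid
  exact mem_interior_iff_mem_nhds.1 hmid

namespace PointedCone

variable (C : PointedCone ℝ X)

def diffsInBall (r : ℝ) : Set X :=
  {x | ∃ a ∈ C, ∃ b ∈ C, ‖a‖ ≤ r ∧ ‖b‖ ≤ r ∧ x = a - b}

variable {C}

theorem convex_diffsInBall (r : ℝ) : Convex ℝ (C.diffsInBall r) := by
  rintro _ ⟨a, ha, b, hb, hna, hnb, rfl⟩ _ ⟨a', ha', b', hb', hna', hnb', rfl⟩ s t hs ht hst
  have hball := convex_closedBall (0 : X) r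
  refine ⟨s • a + t • a', C.add_mem (C.smul_mem hs ha) (C.smul_mem ht ha'),
    s • b + t • b', C.add_mem (C.smul_mem hs hb) (C.smul_mem ht hb'), ?_, ?_, ?_⟩
  · simpa using hball (by simpa using hna) (by simpa using hna') hs ht hst
  · simpa using hball (by simpa using hnb) (by simpa using hnb') hs ht hst
  · simp only [smul_sub]
    abel

theorem neg_mem_diffsInBall {r : ℝ} {x : X} (hx : x ∈ C.diffsInBall r) :
    -x ∈ C.diffsInBall r := by
  obtain ⟨a, ha, b, hb, hna, hnb, rfl⟩ := hx
  exact ⟨b, hb, a, ha, hnb, hna, neg_sub a b⟩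

theorem smul_mem_diffsInBall {r t : ℝ} (ht : 0 ≤ t) {x : X} (hx : x ∈ C.diffsInBall r) :
    t • x ∈ C.diffsInBall (t * r) := by
  obtain ⟨a, ha, b, hb, hna, hnb, rfl⟩ := hx
  refine ⟨t • a, C.smul_mem ht ha, t • b, C.smul_mem ht hb, ?_, ?_, smul_sub t a b⟩ <;>
    rw [norm_smul, Real.norm_of_nonneg ht] <;> gcongr

theorem smul_diffsInBall {r t : ℝ} (ht : 0 < t) :
    t • C.diffsInBall r = C.diffsInBall (t * r) := by
  ext x
  refine ⟨fun ⟨y, hy, hyx⟩ => hyx ▸ smul_mem_diffsInBall ht.le hy, fun hx => ?_⟩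
  refine ⟨t⁻¹ • x, ?_, smul_inv_smul₀ ht.ne' x⟩
  simpa [inv_mul_cancel_left₀ ht.ne'] using smul_mem_diffsInBall (inv_nonneg.2 ht.le) hx

theorem closure_diffsInBall_one_mem_nhds [CompleteSpace X]
    (hgen : ∀ x, ∃ a ∈ C, ∃ b ∈ C, x = a - b) : closure (C.diffsInBall 1) ∈ 𝓝 0 := by
  refine IsClosed.mem_nhds_zero_of_convex_of_absorbing isClosed_closure
    (convex_diffsInBall 1).closure
    (fun x hx => map_mem_closure continuous_neg hx fun _ => neg_mem_diffsInBall) fun x => ?_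
  obtain ⟨a, ha, b, hb, rfl⟩ := hgen x
  obtain ⟨n, hn⟩ := exists_nat_ge (max ‖a‖ ‖b‖)
  refine ⟨n, smul_set_mono subset_closure ?_⟩
  rw [smul_diffsInBall (by positivity), mul_one]
  exact ⟨a, ha, b, hb, by linarith [le_max_left ‖a‖ ‖b‖], by linarith [le_max_right ‖a‖ ‖b‖],
    rfl⟩

theorem ball_subset_closure_diffsInBall {r t : ℝ} (ht : 0 < t)
    (h : ball (0 : X) r ⊆ closure (C.diffsInBall 1)) :
    ball (0 : X) (t * r) ⊆ closure (C.diffsInBall t) :=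
  calc ball (0 : X) (t * r) = t • ball 0 r := by
        rw [_root_.smul_ball ht.ne', smul_zero, Real.norm_of_nonneg ht.le]
    _ ⊆ t • closure (C.diffsInBall 1) := smul_set_mono h
    _ = closure (C.diffsInBall t) := by rw [← closure_smul₀, smul_diffsInBall ht, mul_one]

theorem ball_subset_diffsInBall_two [CompleteSpace X] (hC : IsClosed (C : Set X)) {r : ℝ}
    (h : ball (0 : X) r ⊆ closure (C.diffsInBall 1)) : ball (0 : X) r ⊆ C.diffsInBall 2 := by
  intro y hy
  have hr : 0 < r := pos_of_mem_ball hy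
  obtain ⟨u, rfl, hu⟩ := exists_seq_of_forall_exists_succ
    (P := fun n z => z ∈ ball (0 : X) ((1 / 2) ^ n * r))
    (R := fun n z z' => z - z' ∈ C.diffsInBall ((1 / 2) ^ n)) (by simpa using hy)
    fun n z hz => by
      obtain ⟨d, hd, hzd⟩ := Metric.mem_closure_iff.1
        (ball_subset_closure_diffsInBall (by positivity) h hz) ((1 / 2) ^ (n + 1) * r)
        (by positivity)
      exact ⟨z - d, by rwa [mem_ball_zero_iff, ← dist_eq_norm], by rwa [sub_sub_cancel]⟩
  choose a ha b hb hna hnb hab using fun n => (hu n).2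
  have hsa : Summable a := .of_norm_bounded summable_geometric_two hna
  have hsb : Summable b := .of_norm_bounded summable_geometric_two hnb
  refine ⟨∑' n, a n, tsum_mem hC ha, ∑' n, b n, tsum_mem hC hb,
    tsum_of_norm_bounded hasSum_geometric_two hna, tsum_of_norm_bounded hasSum_geometric_two hnb,
    ?_⟩
  have hpartial := (hsa.hasSum.sub hsb.hasSum).tendsto_sum_nat
  simp_rw [← hab, Finset.sum_range_sub'] at hpartial
  have hu0 : Tendsto u atTop (𝓝 0) := by
    refine squeeze_zero_norm (fun n => (mem_ball_zero_iff.1 (hu n).1).le) ?_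
    simpa using (tendsto_pow_atTop_nhds_zero_of_lt_one (r := (1 / 2 : ℝ)) (by norm_num)
      (by norm_num)).mul_const r
  simpa using tendsto_nhds_unique (tendsto_const_nhds.sub hu0) hpartial

theorem exists_forall_mem_diffsInBall [CompleteSpace X] (hC : IsClosed (C : Set X))
    (hgen : ∀ x, ∃ a ∈ C, ∃ b ∈ C, x = a - b) :
    ∃ K > 0, ∀ x : X, x ∈ C.diffsInBall (K * ‖x‖) := by
  obtain ⟨r, hr, hball⟩ := Metric.mem_nhds_iff.1 (closure_diffsInBall_one_mem_nhds hgen)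
  refine ⟨4 / r, by positivity, fun x => ?_⟩
  rcases eq_or_ne x 0 with rfl | hx
  · exact ⟨0, C.zero_mem, 0, C.zero_mem, by simp⟩
  set c := 2 * ‖x‖ / r
  have hc : 0 < c := by positivity
  have hmem : c⁻¹ • x ∈ ball (0 : X) r := by
    rw [mem_ball_zero_iff, norm_smul, Real.norm_of_nonneg (by positivity),
      show c⁻¹ * ‖x‖ = r / 2 by simp only [c]; field_simp]
    linarith
  have := smul_mem_diffsInBall hc.le (ball_subset_diffsInBall_two hC hball hmem)
  rwa [smul_inv_smul₀ hc.ne', show c * 2 = 4 / r * ‖x‖ by ring] at this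

theorem lowerHemicontinuous_inter_preimage_sub {K : ℝ}
    (hK : ∀ x : X, x ∈ C.diffsInBall (K * ‖x‖)) :
    LowerHemicontinuous fun x : X => (C : Set X) ∩ (· - x) ⁻¹' C := by
  refine fun x => lowerHemicontinuousAt_iff.2 fun U hU ⟨a, ⟨ha, hax⟩, haU⟩ => ?_
  obtain ⟨ε, hε, hball⟩ := Metric.isOpen_iff.1 hU a haU
  have hsmall : ∀ᶠ x' in 𝓝 x, K * ‖x' - x‖ < ε :=
    ((continuous_const.mul (continuous_id.sub continuous_const).norm).tendsto' x 0
      (by simp)).eventually (gt_mem_nhds hε)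
  filter_upwards [hsmall] with x' hx'
  obtain ⟨u, hu, v, hv, hnu, -, huv⟩ := hK (x' - x)
  refine ⟨a + u, ⟨C.add_mem ha hu, ?_⟩, hball ?_⟩
  · rw [sub_eq_iff_eq_add] at huv
    rw [mem_preimage, huv, show a + u - (u - v + x) = (a - x) + v by abel]
    exact C.add_mem hax hv
  · rw [mem_ball, dist_eq_norm, add_sub_cancel_left]
    exact hnu.trans_lt hx'

theorem exists_continuous_mem_and_sub_mem [CompleteSpace X] (hC : IsClosed (C : Set X)) {K : ℝ}
    (hK : ∀ x : X, x ∈ C.diffsInBall (K * ‖x‖)) :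
    ∃ f : X → X, Continuous f ∧ ∀ x, f x ∈ C ∧ f x - x ∈ C ∧ ‖f x‖ ≤ K * ‖x‖ + 1 := by
  let F : X → Set X := fun x => (C : Set X) ∩ (· - x) ⁻¹' C ∩ ball 0 (K * ‖x‖ + 1)
  have hF : LowerHemicontinuous F :=
    (lowerHemicontinuous_inter_preimage_sub hK).inter_hasOpenCGraph
      (isOpen_lt (continuous_snd.dist continuous_const) (by fun_prop))
  have hne : ∀ x, (F x).Nonempty := fun x => by
    obtain ⟨a, ha, b, hb, hna, -, hab⟩ := hK x
    refine ⟨a, ⟨ha, by rwa [mem_preimage, hab, sub_sub_cancel]⟩, ?_⟩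
    rw [mem_ball_zero_iff]
    linarith
  have hconv : ∀ x, Convex ℝ (F x) := fun x => by
    have hshift : Convex ℝ ((· - x) ⁻¹' (C : Set X)) := by
      simpa only [← sub_eq_add_neg] using C.convex.translate_preimage_left (-x)
    exact (C.convex.inter hshift).inter (convex_ball _ _)
  obtain ⟨f, hf, hfF⟩ := hF.exists_continuous_mem_closure hne hconv
  refine ⟨f, hf, fun x => ?_⟩
  have hclosed : IsClosed ((C : Set X) ∩ (· - x) ⁻¹' C ∩ closedBall 0 (K * ‖x‖ + 1)) :=
    (hC.inter (hC.preimage (by fun_prop))).inter isClosed_closedBall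
  obtain ⟨⟨hfC, hfxC⟩, hfK⟩ :=
    closure_minimal (inter_subset_inter_right _ ball_subset_closedBall) hclosed (hfF x)
  exact ⟨hfC, hfxC, mem_closedBall_zero_iff.1 hfK⟩

end PointedCone

end Cone

/-- If `X` is a pre-ordered Banach space whose closed cone `Xpos` is
generating, then there exist `α > 0` and continuous positively homogeneous maps
`p, m : X → Xpos` with `x = p x - m x` and `‖p x‖ + ‖m x‖ ≤ α * ‖x‖` for all `x`. -/
theorem stmt3
    {X : Type*} [NormedAddCommGroup X] [NormedSpace ℝ X] [CompleteSpace X]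
    (Xpos : Set X) (hXpos_closed : IsClosed Xpos)
    (hXpos_add : ∀ x ∈ Xpos, ∀ y ∈ Xpos, x + y ∈ Xpos)
    (hXpos_smul : ∀ (t : ℝ), 0 ≤ t → ∀ x ∈ Xpos, t • x ∈ Xpos)
    (hgen : ∀ x : X, ∃ a ∈ Xpos, ∃ b ∈ Xpos, x = a - b) :
    ∃ (α : ℝ), 0 < α ∧ ∃ (p m : X → X),
      Continuous p ∧ Continuous m ∧
      (∀ x : X, p x ∈ Xpos) ∧ (∀ x : X, m x ∈ Xpos) ∧
      (∀ (t : ℝ), 0 ≤ t → ∀ x : X, p (t • x) = t • p x) ∧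
      (∀ (t : ℝ), 0 ≤ t → ∀ x : X, m (t • x) = t • m x) ∧
      (∀ x : X, x = p x - m x) ∧
      (∀ x : X, ‖p x‖ + ‖m x‖ ≤ α * ‖x‖) := by
  have hzero : (0 : X) ∈ Xpos := by
    obtain ⟨a, ha, -⟩ := hgen 0
    simpa using hXpos_smul 0 le_rfl a ha
  obtain ⟨C, rfl⟩ : ∃ C : PointedCone ℝ X, (C : Set X) = Xpos :=
    ⟨{ carrier := Xpos
       add_mem' := fun ha hb => hXpos_add _ ha _ hb
       zero_mem' := hzero
       smul_mem' := fun t x hx => hXpos_smul t t.2 x hx }, rfl⟩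
  obtain ⟨K, hK, hdec⟩ := C.exists_forall_mem_diffsInBall hXpos_closed hgen
  obtain ⟨f, hf, hfx⟩ := C.exists_continuous_mem_and_sub_mem hXpos_closed hdec
  have hpbound : ∀ y : X, ‖y‖ = 1 → ‖f y‖ ≤ K + 1 := fun y hy => by
    simpa [hy] using (hfx y).2.2
  have hmbound : ∀ y : X, ‖y‖ = 1 → ‖f y - y‖ ≤ K + 2 := fun y hy =>
    (norm_sub_le _ _).trans (by linarith [hpbound y hy])
  refine ⟨2 * K + 3, by linarith, homogenize f, homogenize fun y => f y - y,
    continuous_homogenize hf hpbound, continuous_homogenize (hf.sub continuous_id) hmbound,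
    fun x => C.smul_mem (norm_nonneg x) (hfx _).1,
    fun x => C.smul_mem (norm_nonneg x) (hfx _).2.1,
    fun t ht x => homogenize_smul _ ht x, fun t ht x => homogenize_smul _ ht x,
    fun x => by rw [homogenize_sub_self, sub_sub_cancel], fun x => ?_⟩
  linarith [norm_homogenize_le hpbound x, norm_homogenize_le hmbound x]
end

section
/- Let Ω be a locally compact Hausdorff space and X a pre-ordered Banach space whose closed cone X₊ is generating. Then there exists a constant α > 0, depending only on X, with the property that for every continuous compactly supported function f : Ω → X there exist continuous compactly supported functions f⁺, f⁻ : Ω → X with f⁺(ω), f⁻(ω) ∈ X₊ for all ω ∈ Ω, f = f⁺ − f⁻, supp(f⁺) ⊆ supp(f), supp(f⁻) ⊆ supp(f), and ‖f⁺(ω)‖ + ‖f⁻(ω)‖ ≤ α‖f(ω)‖ for all ω ∈ Ω (in particular ‖f⁺‖∞ ≤ α‖f‖∞ and ‖f⁻‖∞ ≤ α‖f‖∞). -/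
/-!
By Baire's theorem some `closure (K ∩ B_n - K ∩ B_n)` has interior; being convex and symmetric it
then contains a ball around `0`, so every `x` is approximated by differences of elements of `K` of
norm `≤ κ ‖x‖`. A partition of unity on the unit sphere `S` turns these pointwise approximations of
the inclusion `S → X` into continuous ones, i.e. the same approximation property holds in the
Banach space `S →ᵇ X` ordered by the pointwise cone. There the iteration from the proof of the open
mapping theorem makes the decomposition exact, and extending both parts positively homogeneously
gives continuous maps `P N : X → K` with `x = P x - N x` and `‖P x‖, ‖N x‖ ≤ C ‖x‖`. Finally
`f⁺ = P ∘ f` and `f⁻ = N ∘ f`.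
-/

open Filter Metric Set
open scoped Pointwise Topology

theorem Convex.ball_zero_subset_of_ball_subset {E : Type*} [NormedAddCommGroup E]
    [NormedSpace ℝ E] {s : Set E} (hs : Convex ℝ s) (hneg : -s = s) {z : E} {ρ : ℝ}
    (hz : ball z ρ ⊆ s) : ball 0 ρ ⊆ s := by
  intro y hy
  rw [mem_ball_zero_iff] at hy
  have hplus : z + y ∈ s := hz (by simpa [dist_eq_norm] using hy)
  have hminus : -(z - y) ∈ s := hneg ▸ neg_mem_neg.2 (hz (by simpa [dist_eq_norm] using hy))
  have hmid := hs hplus hminus (by norm_num : (0 : ℝ) ≤ 1 / 2) (by norm_num : (0 : ℝ) ≤ 1 / 2)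
    (by norm_num)
  convert hmid using 1
  module

namespace PointedCone

variable {E : Type*} [NormedAddCommGroup E] [NormedSpace ℝ E] (K : PointedCone ℝ E)

def boundedDiffs (r : ℝ) : Set E :=
  ((K : Set E) ∩ closedBall 0 r) - ((K : Set E) ∩ closedBall 0 r)

variable {K}

theorem convex_boundedDiffs (r : ℝ) : Convex ℝ (K.boundedDiffs r) :=
  (K.convex.inter (convex_closedBall 0 r)).sub (K.convex.inter (convex_closedBall 0 r))

theorem neg_boundedDiffs (r : ℝ) : -K.boundedDiffs r = K.boundedDiffs r :=
  neg_sub _ _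

theorem zero_mem_boundedDiffs {r : ℝ} (hr : 0 ≤ r) : (0 : E) ∈ K.boundedDiffs r :=
  ⟨0, ⟨K.zero_mem, by simpa using hr⟩, 0, ⟨K.zero_mem, by simpa using hr⟩, sub_zero 0⟩

theorem smul_boundedDiffs_subset {t : ℝ} (ht : 0 ≤ t) (r : ℝ) :
    t • K.boundedDiffs r ⊆ K.boundedDiffs (t * r) := by
  have hball : ∀ a ∈ (K : Set E) ∩ closedBall 0 r,
      t • a ∈ (K : Set E) ∩ closedBall 0 (t * r) := fun a ⟨haK, har⟩ => ⟨K.smul_mem ht haK, by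
      rw [mem_closedBall_zero_iff, norm_smul, Real.norm_of_nonneg ht] at *
      exact mul_le_mul_of_nonneg_left har ht⟩
  rintro _ ⟨_, ⟨a, ha, b, hb, rfl⟩, rfl⟩
  exact ⟨t • a, hball a ha, t • b, hball b hb, (smul_sub t a b).symm⟩

theorem iUnion_boundedDiffs_eq_univ (hgen : ∀ x : E, ∃ a ∈ K, ∃ b ∈ K, x = a - b) :
    ⋃ n : ℕ, K.boundedDiffs (n + 1) = univ := by
  refine eq_univ_of_forall fun x => ?_
  obtain ⟨a, ha, b, hb, rfl⟩ := hgen x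
  obtain ⟨n, hn⟩ := exists_nat_ge (max ‖a‖ ‖b‖)
  have hn' : max ‖a‖ ‖b‖ ≤ n + 1 := by linarith
  exact mem_iUnion.2 ⟨n, a, ⟨ha, mem_closedBall_zero_iff.2 (le_of_max_le_left hn')⟩,
    b, ⟨hb, mem_closedBall_zero_iff.2 (le_of_max_le_right hn')⟩, rfl⟩

theorem exists_forall_mem_closure_boundedDiffs [CompleteSpace E]
    (hgen : ∀ x : E, ∃ a ∈ K, ∃ b ∈ K, x = a - b) :
    ∃ κ > 0, ∀ x : E, x ∈ closure (K.boundedDiffs (κ * ‖x‖)) := by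
  have hcover : ⋃ n : ℕ, closure (K.boundedDiffs (n + 1)) = univ :=
    eq_univ_of_univ_subset <|
      iUnion_boundedDiffs_eq_univ hgen ▸ iUnion_mono fun _ => subset_closure
  obtain ⟨n, z, hz⟩ := nonempty_interior_of_iUnion_of_closed (fun _ => isClosed_closure) hcover
  obtain ⟨ρ, hρ, hzρ⟩ := Metric.isOpen_iff.1 isOpen_interior z hz
  have hball : ball 0 ρ ⊆ closure (K.boundedDiffs (n + 1)) :=
    (convex_boundedDiffs _).closure.ball_zero_subset_of_ball_subset
      (by rw [neg_closure, neg_boundedDiffs]) (hzρ.trans interior_subset)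
  refine ⟨2 * (n + 1) / ρ, by positivity, fun x => ?_⟩
  rcases eq_or_ne x 0 with rfl | hx
  · simpa using subset_closure (zero_mem_boundedDiffs (K := K) le_rfl)
  set t := 2 * ‖x‖ / ρ
  have ht : 0 < t := by positivity
  have hx_small : t⁻¹ • x ∈ closure (K.boundedDiffs (n + 1)) := hball <| by
    have : t⁻¹ * ‖x‖ = ρ / 2 := by
      simp only [t, inv_div]
      field_simp [norm_ne_zero_iff.2 hx]
    rw [mem_ball_zero_iff, norm_smul, norm_inv, Real.norm_of_nonneg ht.le, this]
    linarith
  have hx_mem : x ∈ t • closure (K.boundedDiffs (n + 1)) :=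
    ⟨_, hx_small, smul_inv_smul₀ ht.ne' x⟩
  rw [← closure_smul₀] at hx_mem
  convert closure_mono (smul_boundedDiffs_subset ht.le _) hx_mem using 3
  simp only [t]
  field_simp

theorem exists_mem_boundedDiffs_norm_sub_le {κ : ℝ}
    (h : ∀ x : E, x ∈ closure (K.boundedDiffs (κ * ‖x‖))) (w : E) :
    ∃ a ∈ (K : Set E) ∩ closedBall 0 (κ * ‖w‖), ∃ b ∈ (K : Set E) ∩ closedBall 0 (κ * ‖w‖),
      ‖w - (a - b)‖ ≤ ‖w‖ / 2 := by
  rcases eq_or_ne w 0 with rfl | hw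
  · exact ⟨0, by simp, 0, by simp, by simp⟩
  obtain ⟨_, ⟨a, ha, b, hb, rfl⟩, hab⟩ :=
    Metric.mem_closure_iff.1 (h w) (‖w‖ / 2) (by positivity)
  exact ⟨a, ha, b, hb, (dist_eq_norm w (a - b)) ▸ hab.le⟩

theorem mem_boundedDiffs_of_forall_mem_closure [CompleteSpace E] (hK : IsClosed (K : Set E))
    {κ : ℝ} (hκ : 0 ≤ κ) (h : ∀ x : E, x ∈ closure (K.boundedDiffs (κ * ‖x‖))) (x : E) :
    x ∈ K.boundedDiffs (2 * κ * ‖x‖) := by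
  choose a ha b hb hab using exists_mem_boundedDiffs_norm_sub_le h
  let r : ℕ → E := fun k => (fun w => w - (a w - b w))^[k] x
  have hr_succ : ∀ k, r (k + 1) = r k - (a (r k) - b (r k)) :=
    fun k => Function.iterate_succ_apply' _ k x
  have hr_norm : ∀ k, ‖r k‖ ≤ (1 / 2) ^ k * ‖x‖ := by
    intro k
    induction k with
    | zero => simp [r]
    | succ k ih =>
      rw [hr_succ, pow_succ]
      linarith [hab (r k)]
  let g : ℕ → ℝ := fun k => κ * ((1 / 2) ^ k * ‖x‖)
  have hg : HasSum g (2 * κ * ‖x‖) := by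
    rw [show 2 * κ * ‖x‖ = κ * (2 * ‖x‖) by ring]
    exact (hasSum_geometric_two.mul_right ‖x‖).mul_left κ
  have ha_le : ∀ k, ‖a (r k)‖ ≤ g k := fun k =>
    (mem_closedBall_zero_iff.1 (ha _).2).trans (mul_le_mul_of_nonneg_left (hr_norm k) hκ)
  have hb_le : ∀ k, ‖b (r k)‖ ≤ g k := fun k =>
    (mem_closedBall_zero_iff.1 (hb _).2).trans (mul_le_mul_of_nonneg_left (hr_norm k) hκ)
  have hsa := Summable.of_norm_bounded hg.summable ha_le
  have hsb := Summable.of_norm_bounded hg.summable hb_le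
  refine ⟨∑' k, a (r k), ⟨tsum_mem hK fun k => (ha _).1,
      mem_closedBall_zero_iff.2 (tsum_of_norm_bounded hg ha_le)⟩,
    ∑' k, b (r k), ⟨tsum_mem hK fun k => (hb _).1,
      mem_closedBall_zero_iff.2 (tsum_of_norm_bounded hg hb_le)⟩, ?_⟩
  have hpartial :
      Tendsto (fun n => ∑ k ∈ Finset.range n, (a (r k) - b (r k))) atTop (𝓝 x) := by
    have hr_zero : Tendsto r atTop (𝓝 0) := squeeze_zero_norm hr_norm <| by
      simpa using (tendsto_pow_atTop_nhds_zero_of_lt_one (by norm_num : (0 : ℝ) ≤ 1 / 2)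
        (by norm_num)).mul_const ‖x‖
    have hsum : ∀ n, ∑ k ∈ Finset.range n, (a (r k) - b (r k)) = x - r n := fun n => by
      have hstep : ∀ k, a (r k) - b (r k) = r k - r (k + 1) := fun k => by
        rw [hr_succ]; abel
      simp_rw [hstep, Finset.sum_range_sub']
      rfl
    simpa [hsum] using tendsto_const_nhds.sub hr_zero
  exact tendsto_nhds_unique (hsa.hasSum.sub hsb.hasSum).tendsto_sum_nat hpartial

theorem exists_continuous_dist_sub_lt {Y : Type*} [TopologicalSpace Y] [NormalSpace Y]
    [ParacompactSpace Y] {κ : ℝ} (hκ : 0 ≤ κ) (h : ∀ x : E, x ∈ closure (K.boundedDiffs (κ * ‖x‖)))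
    {u : Y → E} (hu : Continuous u) {c : ℝ} (hc : ∀ y, ‖u y‖ ≤ c) {ε : ℝ} (hε : 0 < ε) :
    ∃ p : C(Y, E × E), ∀ y, p y ∈ ((K : Set E) ∩ closedBall 0 (κ * c)) ×ˢ
      ((K : Set E) ∩ closedBall 0 (κ * c)) ∧ dist (u y) ((p y).1 - (p y).2) < ε := by
  set B := (K : Set E) ∩ closedBall 0 (κ * c)
  let t : Y → Set (E × E) := fun y =>
    B ×ˢ B ∩ (LinearMap.fst ℝ E E - LinearMap.snd ℝ E E) ⁻¹' ball (u y) ε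
  have ht : ∀ y, Convex ℝ (t y) := fun y =>
    have hB : Convex ℝ B := K.convex.inter (convex_closedBall 0 _)
    (hB.prod hB).inter ((convex_ball _ _).linear_preimage _)
  suffices H : ∀ y₀, ∃ q : E × E, ∀ᶠ y in 𝓝 y₀, q ∈ t y by
    obtain ⟨p, hp⟩ := exists_continuous_forall_mem_convex_of_local_const ht H
    exact ⟨p, fun y => ⟨(hp y).1, mem_ball_comm.1 (hp y).2⟩⟩
  intro y₀
  obtain ⟨_, ⟨a, ha, b, hb, rfl⟩, hab⟩ :=
    Metric.mem_closure_iff.1 (h (u y₀)) (ε / 2) (by positivity)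
  have hsub : (K : Set E) ∩ closedBall 0 (κ * ‖u y₀‖) ⊆ B := inter_subset_inter_right _
    (closedBall_subset_closedBall (mul_le_mul_of_nonneg_left (hc y₀) hκ))
  refine ⟨(a, b), (hu.tendsto y₀).eventually (ball_mem_nhds _ (half_pos hε)) |>.mono
    fun y hy => ⟨⟨hsub ha, hsub hb⟩, ?_⟩⟩
  calc dist (a - b) (u y) ≤ dist (u y₀) (a - b) + dist (u y) (u y₀) := by
        rw [dist_comm (u y₀), dist_comm (u y)]
        exact dist_triangle _ _ _
    _ < ε / 2 + ε / 2 := add_lt_add hab hy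
    _ = ε := add_halves ε

end PointedCone

namespace BoundedContinuousFunction

variable {Y X : Type*} [TopologicalSpace Y] [NormedAddCommGroup X] [NormedSpace ℝ X]
  {K : PointedCone ℝ X}

variable (Y K) in
def pointwiseCone : PointedCone ℝ (Y →ᵇ X) where
  carrier := {f | ∀ y, f y ∈ K}
  add_mem' hf hg y := K.add_mem (hf y) (hg y)
  zero_mem' _ := K.zero_mem
  smul_mem' c _ hf y := K.smul_mem c.2 (hf y)

theorem mem_pointwiseCone {f : Y →ᵇ X} : f ∈ pointwiseCone Y K ↔ ∀ y, f y ∈ K := Iff.rfl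

theorem isClosed_pointwiseCone (hK : IsClosed (K : Set X)) :
    IsClosed (pointwiseCone Y K : Set (Y →ᵇ X)) := by
  have : (pointwiseCone Y K : Set (Y →ᵇ X)) = ⋂ y, (fun f : Y →ᵇ X => f y) ⁻¹' K := by
    ext; simp [mem_pointwiseCone]
  rw [this]
  exact isClosed_iInter fun y => hK.preimage (by fun_prop)

theorem mem_closure_boundedDiffs_pointwiseCone [NormalSpace Y] [ParacompactSpace Y]
    {κ : ℝ} (hκ : 0 ≤ κ) (h : ∀ x : X, x ∈ closure (K.boundedDiffs (κ * ‖x‖)))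
    (u : Y →ᵇ X) :
    u ∈ closure ((pointwiseCone Y K).boundedDiffs (κ * ‖u‖)) := by
  refine Metric.mem_closure_iff.2 fun ε hε => ?_
  obtain ⟨p, hp⟩ := K.exists_continuous_dist_sub_lt hκ h u.continuous (norm_coe_le_norm u)
    (half_pos hε)
  have hR : 0 ≤ κ * ‖u‖ := by positivity
  let P : Y →ᵇ X := ofNormedAddCommGroup (fun y => (p y).1) (by fun_prop) _
    fun y => mem_closedBall_zero_iff.1 (hp y).1.1.2
  let N : Y →ᵇ X := ofNormedAddCommGroup (fun y => (p y).2) (by fun_prop) _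
    fun y => mem_closedBall_zero_iff.1 (hp y).1.2.2
  refine ⟨P - N, ⟨P, ⟨fun y => (hp y).1.1.1, mem_closedBall_zero_iff.2 ((norm_le hR).2 ?_)⟩,
    N, ⟨fun y => (hp y).1.2.1, mem_closedBall_zero_iff.2 ((norm_le hR).2 ?_)⟩, rfl⟩, ?_⟩
  · exact fun y => mem_closedBall_zero_iff.1 (hp y).1.1.2
  · exact fun y => mem_closedBall_zero_iff.1 (hp y).1.2.2
  · exact ((dist_le (half_pos hε).le).2 fun y => (hp y).2.le).trans_lt (half_lt_self hε)

end BoundedContinuousFunction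

section HomogeneousExtension

variable {X F : Type*} [NormedAddCommGroup X] [NormedSpace ℝ X] [NormedAddCommGroup F]
  [NormedSpace ℝ F] {g : sphere (0 : X) 1 → F}

open scoped Classical in
/-- `(homeomorphUnitSphereProd X ⟨x, hx⟩).1` is `‖x‖⁻¹ • x`, so this is
`x ↦ ‖x‖ • g (x / ‖x‖)`. -/
noncomputable def homogeneousExtension (g : sphere (0 : X) 1 → F) (x : X) : F :=
  if hx : x = 0 then 0 else ‖x‖ • g (homeomorphUnitSphereProd X ⟨x, hx⟩).1

theorem homogeneousExtension_of_ne {x : X} (hx : x ≠ 0) :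
    homogeneousExtension g x = ‖x‖ • g (homeomorphUnitSphereProd X ⟨x, hx⟩).1 :=
  dif_neg hx

theorem homogeneousExtension_coe (x : X) :
    homogeneousExtension (fun y : sphere (0 : X) 1 => (y : X)) x = x := by
  rcases eq_or_ne x 0 with rfl | hx
  · exact dif_pos rfl
  rw [homogeneousExtension_of_ne hx, homeomorphUnitSphereProd_apply_fst_coe,
    smul_inv_smul₀ (norm_ne_zero_iff.2 hx)]

theorem homogeneousExtension_sub (g₁ g₂ : sphere (0 : X) 1 → F) (x : X) :
    homogeneousExtension (g₁ - g₂) x =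
      homogeneousExtension g₁ x - homogeneousExtension g₂ x := by
  rcases eq_or_ne x 0 with rfl | hx
  · simp [homogeneousExtension]
  simp only [homogeneousExtension_of_ne hx, Pi.sub_apply, smul_sub]

theorem homogeneousExtension_mem (K : PointedCone ℝ F) (hg : ∀ y, g y ∈ K) (x : X) :
    homogeneousExtension g x ∈ K := by
  rcases eq_or_ne x 0 with rfl | hx
  · simp [homogeneousExtension]
  rw [homogeneousExtension_of_ne hx]
  exact K.smul_mem (norm_nonneg x) (hg _)

theorem norm_homogeneousExtension_le {C : ℝ} (hC : ∀ y, ‖g y‖ ≤ C) (x : X) :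
    ‖homogeneousExtension g x‖ ≤ C * ‖x‖ := by
  rcases eq_or_ne x 0 with rfl | hx
  · simp [homogeneousExtension]
  rw [homogeneousExtension_of_ne hx, norm_smul, norm_norm, mul_comm]
  exact mul_le_mul_of_nonneg_right (hC _) (norm_nonneg x)

theorem continuous_homogeneousExtension (hg : Continuous g) {C : ℝ} (hC : ∀ y, ‖g y‖ ≤ C) :
    Continuous (homogeneousExtension g) := by
  refine continuous_iff_continuousAt.2 fun x => ?_
  rcases eq_or_ne x 0 with rfl | hx
  · have hlim : Tendsto (fun x : X => C * ‖x‖) (𝓝 0) (𝓝 0) := by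
      simpa using (tendsto_norm_zero (E := X)).const_mul C
    simpa [ContinuousAt, homogeneousExtension] using
      squeeze_zero_norm (norm_homogeneousExtension_le hC) hlim
  have hon : ContinuousOn (homogeneousExtension g) {0}ᶜ := by
    rw [continuousOn_iff_continuous_domRestrict]
    convert continuous_subtype_val.norm.smul
      (hg.comp (continuous_fst.comp (homeomorphUnitSphereProd X).continuous)) using 1
    ext x
    exact homogeneousExtension_of_ne x.2
  exact hon.continuousAt (isOpen_compl_singleton.mem_nhds hx)

end HomogeneousExtension

open BoundedContinuousFunction in
theorem PointedCone.exists_continuous_decomposition {X : Type*} [NormedAddCommGroup X]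
    [NormedSpace ℝ X] [CompleteSpace X] (K : PointedCone ℝ X) (hK : IsClosed (K : Set X))
    (hgen : ∀ x : X, ∃ a ∈ K, ∃ b ∈ K, x = a - b) :
    ∃ C > 0, ∃ P N : X → X, Continuous P ∧ Continuous N ∧ (∀ x, P x ∈ K) ∧ (∀ x, N x ∈ K) ∧
      (∀ x, x = P x - N x) ∧ (∀ x, ‖P x‖ ≤ C * ‖x‖) ∧ ∀ x, ‖N x‖ ≤ C * ‖x‖ := by
  obtain ⟨κ, hκ, hclosure⟩ := K.exists_forall_mem_closure_boundedDiffs hgen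
  let u : sphere (0 : X) 1 →ᵇ X :=
    ofNormedAddCommGroup Subtype.val continuous_subtype_val 1 fun y =>
      (norm_eq_of_mem_sphere y).le
  have hu : ‖u‖ ≤ 1 := (norm_le zero_le_one).2 fun y => (norm_eq_of_mem_sphere y).le
  obtain ⟨P, ⟨hPK, hPu⟩, N, ⟨hNK, hNu⟩, hPN⟩ :=
    (pointwiseCone _ K).mem_boundedDiffs_of_forall_mem_closure (isClosed_pointwiseCone hK)
      hκ.le (mem_closure_boundedDiffs_pointwiseCone hκ.le hclosure) u
  have hbound :
      ∀ f ∈ closedBall (0 : sphere (0 : X) 1 →ᵇ X) (2 * κ * ‖u‖), ∀ y, ‖f y‖ ≤ 2 * κ :=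
    fun f hf y => (norm_coe_le_norm f y).trans <| (mem_closedBall_zero_iff.1 hf).trans <|
      mul_le_of_le_one_right (by positivity) hu
  refine ⟨2 * κ, by positivity, homogeneousExtension P, homogeneousExtension N,
    continuous_homogeneousExtension P.continuous (hbound P hPu),
    continuous_homogeneousExtension N.continuous (hbound N hNu),
    homogeneousExtension_mem K hPK, homogeneousExtension_mem K hNK, fun x => ?_,
    norm_homogeneousExtension_le (hbound P hPu), norm_homogeneousExtension_le (hbound N hNu)⟩
  change P - N = u at hPN
  rw [← homogeneousExtension_sub, ← coe_sub, hPN]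
  exact (homogeneousExtension_coe x).symm

theorem stmt4_general
    {Ω : Type*} [TopologicalSpace Ω]
    {X : Type*} [NormedAddCommGroup X] [NormedSpace ℝ X] [CompleteSpace X]
    (Xpos : Set X) (hXpos_closed : IsClosed Xpos)
    (hXpos_add : ∀ x ∈ Xpos, ∀ y ∈ Xpos, x + y ∈ Xpos)
    (hXpos_smul : ∀ (t : ℝ), 0 ≤ t → ∀ x ∈ Xpos, t • x ∈ Xpos)
    (hgen : ∀ x : X, ∃ a ∈ Xpos, ∃ b ∈ Xpos, x = a - b) :
    ∃ (α : ℝ), 0 < α ∧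
      ∀ f : Ω → X, Continuous f → HasCompactSupport f →
        ∃ (fp fm : Ω → X),
          Continuous fp ∧ Continuous fm ∧
          HasCompactSupport fp ∧ HasCompactSupport fm ∧
          (∀ ω : Ω, fp ω ∈ Xpos) ∧ (∀ ω : Ω, fm ω ∈ Xpos) ∧
          (∀ ω : Ω, f ω = fp ω - fm ω) ∧
          tsupport fp ⊆ tsupport f ∧ tsupport fm ⊆ tsupport f ∧
          (∀ ω : Ω, ‖fp ω‖ + ‖fm ω‖ ≤ α * ‖f ω‖) := by
  let K : PointedCone ℝ X :=
    { carrier := Xpos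
      add_mem' := fun ha hb => hXpos_add _ ha _ hb
      zero_mem' := by
        obtain ⟨a, ha, -⟩ := hgen 0
        simpa using hXpos_smul 0 le_rfl a ha
      smul_mem' := fun c x hx => hXpos_smul c c.2 x hx }
  obtain ⟨C, hC, P, N, hP, hN, hPK, hNK, hPN, hPC, hNC⟩ :=
    K.exists_continuous_decomposition hXpos_closed hgen
  have hP0 : P 0 = 0 := norm_le_zero_iff.1 (by simpa using hPC 0)
  have hN0 : N 0 = 0 := norm_le_zero_iff.1 (by simpa using hNC 0)
  refine ⟨2 * C, by positivity, fun f hf hfc => ⟨P ∘ f, N ∘ f, hP.comp hf, hN.comp hf,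
    hfc.comp_left hP0, hfc.comp_left hN0, fun ω => hPK (f ω), fun ω => hNK (f ω),
    fun ω => hPN (f ω), tsupport_comp_subset hP0 f, tsupport_comp_subset hN0 f, fun ω => ?_⟩⟩
  simp only [Function.comp_apply]
  linarith [hPC (f ω), hNC (f ω)]

/-- Let `Ω` be a locally compact Hausdorff space and `X` a pre-ordered
Banach space whose closed cone `Xpos` is generating. Then there is a constant
`α > 0`, depending only on `X`, such that every continuous compactly supported
`f : Ω → X` can be written as `f = f⁺ - f⁻` with `f⁺, f⁻` continuous, compactly
supported, `Xpos`-valued, with supports contained in the support of `f`, and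
`‖f⁺ ω‖ + ‖f⁻ ω‖ ≤ α * ‖f ω‖` for all `ω` (in particular `‖f⁺ ω‖ ≤ α * ‖f ω‖`
and `‖f⁻ ω‖ ≤ α * ‖f ω‖`). -/
theorem stmt4
    {Ω : Type*} [TopologicalSpace Ω] [LocallyCompactSpace Ω] [T2Space Ω]
    {X : Type*} [NormedAddCommGroup X] [NormedSpace ℝ X] [CompleteSpace X]
    (Xpos : Set X) (hXpos_closed : IsClosed Xpos)
    (hXpos_add : ∀ x ∈ Xpos, ∀ y ∈ Xpos, x + y ∈ Xpos)
    (hXpos_smul : ∀ (t : ℝ), 0 ≤ t → ∀ x ∈ Xpos, t • x ∈ Xpos)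
    (hgen : ∀ x : X, ∃ a ∈ Xpos, ∃ b ∈ Xpos, x = a - b) :
    ∃ (α : ℝ), 0 < α ∧
      ∀ f : Ω → X, Continuous f → HasCompactSupport f →
        ∃ (fp fm : Ω → X),
          Continuous fp ∧ Continuous fm ∧
          HasCompactSupport fp ∧ HasCompactSupport fm ∧
          (∀ ω : Ω, fp ω ∈ Xpos) ∧ (∀ ω : Ω, fm ω ∈ Xpos) ∧
          (∀ ω : Ω, f ω = fp ω - fm ω) ∧
          tsupport fp ⊆ tsupport f ∧ tsupport fm ⊆ tsupport f ∧
          (∀ ω : Ω, ‖fp ω‖ + ‖fm ω‖ ≤ α * ‖f ω‖) :=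
  stmt4_general Xpos hXpos_closed hXpos_add hXpos_smul hgen
end

section
/- Let X and Y be pre-ordered Banach spaces with closed cones, and α, β > 0. If X is approximately α-absolutely conormal and Y is β-absolutely normal, then B(X,Y) is αβ-absolutely normal: for all bounded linear operators T, S : X → Y, if both T ≤ S and −T ≤ S in the operator order, then ‖T‖ ≤ αβ‖S‖. -/
/-- Let `X` and `Y` be pre-ordered Banach spaces with closed cones,
`α, β > 0`. If `X` is approximately `α`-absolutely conormal and `Y` is
`β`-absolutely normal, then `B(X,Y)` is `αβ`-absolutely normal: if `±T ≤ S` in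
the operator order, then `‖T‖ ≤ α * β * ‖S‖`. -/
theorem stmt7
    {X : Type*} [NormedAddCommGroup X] [NormedSpace ℝ X] [CompleteSpace X]
    {Y : Type*} [NormedAddCommGroup Y] [NormedSpace ℝ Y] [CompleteSpace Y]
    (Xpos : Set X) (hXpos_closed : IsClosed Xpos)
    (hXpos_add : ∀ x ∈ Xpos, ∀ y ∈ Xpos, x + y ∈ Xpos)
    (hXpos_smul : ∀ (t : ℝ), 0 ≤ t → ∀ x ∈ Xpos, t • x ∈ Xpos)
    (Ypos : Set Y) (hYpos_closed : IsClosed Ypos)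
    (hYpos_add : ∀ x ∈ Ypos, ∀ y ∈ Ypos, x + y ∈ Ypos)
    (hYpos_smul : ∀ (t : ℝ), 0 ≤ t → ∀ x ∈ Ypos, t • x ∈ Ypos)
    (α β : ℝ) (hα : 0 < α) (hβ : 0 < β)
    -- X is approximately α-absolutely conormal:
    (hXconormal : ∀ x : X, ∀ ε : ℝ, 0 < ε →
      ∃ a ∈ Xpos, (a - x ∈ Xpos ∧ a + x ∈ Xpos) ∧ ‖a‖ < α * ‖x‖ + ε)
    -- Y is β-absolutely normal:
    (hYnormal : ∀ x y : Y, y - x ∈ Ypos → y + x ∈ Ypos → ‖x‖ ≤ β * ‖y‖)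
    (T S : X →L[ℝ] Y)
    (hTS : ∀ x ∈ Xpos, S x - T x ∈ Ypos)
    (hTS' : ∀ x ∈ Xpos, S x + T x ∈ Ypos) :
    ‖T‖ ≤ α * β * ‖S‖ := by
  have hSnorm : (0:ℝ) ≤ ‖S‖ := norm_nonneg _
  apply ContinuousLinearMap.opNorm_le_bound
  · positivity
  intro x
  -- show ‖T x‖ ≤ α * β * ‖S‖ * ‖x‖ using ε-approximation
  have key : ∀ ε : ℝ, 0 < ε → ‖T x‖ ≤ α * β * ‖S‖ * ‖x‖ + (β * ‖S‖ + 1) * ε := by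
    intro ε hε
    obtain ⟨a, ha, ⟨hax1, hax2⟩, hna⟩ := hXconormal x ε hε
    -- S a - T x ∈ Ypos and S a + T x ∈ Ypos
    have h1 : S a - T x ∈ Ypos := by
      have e1 := hYpos_smul (1/2) (by norm_num) _ (hTS _ hax2)
      have e2 := hYpos_smul (1/2) (by norm_num) _ (hTS' _ hax1)
      have := hYpos_add _ e1 _ e2
      have heq : (1/2 : ℝ) • (S (a + x) - T (a + x)) + (1/2 : ℝ) • (S (a - x) + T (a - x)) = S a - T x := by
        simp only [map_add, map_sub]
        module
      rwa [heq] at this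
    have h2 : S a + T x ∈ Ypos := by
      have e1 := hYpos_smul (1/2) (by norm_num) _ (hTS _ hax1)
      have e2 := hYpos_smul (1/2) (by norm_num) _ (hTS' _ hax2)
      have := hYpos_add _ e1 _ e2
      have heq : (1/2 : ℝ) • (S (a - x) - T (a - x)) + (1/2 : ℝ) • (S (a + x) + T (a + x)) = S a + T x := by
        simp only [map_add, map_sub]
        module
      rwa [heq] at this
    have hTx : ‖T x‖ ≤ β * ‖S a‖ := hYnormal (T x) (S a) h1 h2
    have hSa : ‖S a‖ ≤ ‖S‖ * ‖a‖ := S.le_opNorm a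
    calc ‖T x‖ ≤ β * ‖S a‖ := hTx
      _ ≤ β * (‖S‖ * ‖a‖) := by nlinarith [norm_nonneg (S a)]
      _ ≤ β * (‖S‖ * (α * ‖x‖ + ε)) := by gcongr
      _ ≤ α * β * ‖S‖ * ‖x‖ + (β * ‖S‖ + 1) * ε := by nlinarith
  by_contra hcon
  push_neg at hcon
  set δ := (‖T x‖ - α * β * ‖S‖ * ‖x‖) / (β * ‖S‖ + 1) with hδ
  have hδpos : 0 < δ := by
    apply div_pos (by linarith) (by positivity)
  have := key (δ/2) (by positivity)
  have heq : (β * ‖S‖ + 1) * δ = ‖T x‖ - α * β * ‖S‖ * ‖x‖ := by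
    rw [hδ]; field_simp
  nlinarith [mul_pos (show (0:ℝ) < β * ‖S‖ + 1 by positivity) hδpos]
end

section
/- Let X and Y be pre-ordered Banach spaces with closed cones, and α, β > 0. If X is approximately α-sum-conormal and Y is β-normal, then B(X,Y) is αβ-normal: for all bounded linear operators T, S : X → Y, if 0 ≤ T ≤ S in the operator order then ‖T‖ ≤ αβ‖S‖. -/
/-- Let `X` and `Y` be pre-ordered Banach spaces with closed cones,
`α, β > 0`. If `X` is approximately `α`-sum-conormal and `Y` is `β`-normal, then
`B(X,Y)` is `αβ`-normal: if `0 ≤ T ≤ S` in the operator order, then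
`‖T‖ ≤ α * β * ‖S‖`. -/
theorem stmt8
    {X : Type*} [NormedAddCommGroup X] [NormedSpace ℝ X] [CompleteSpace X]
    {Y : Type*} [NormedAddCommGroup Y] [NormedSpace ℝ Y] [CompleteSpace Y]
    (Xpos : Set X) (hXpos_closed : IsClosed Xpos)
    (hXpos_add : ∀ x ∈ Xpos, ∀ y ∈ Xpos, x + y ∈ Xpos)
    (hXpos_smul : ∀ (t : ℝ), 0 ≤ t → ∀ x ∈ Xpos, t • x ∈ Xpos)
    (Ypos : Set Y) (hYpos_closed : IsClosed Ypos)
    (hYpos_add : ∀ x ∈ Ypos, ∀ y ∈ Ypos, x + y ∈ Ypos)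
    (hYpos_smul : ∀ (t : ℝ), 0 ≤ t → ∀ x ∈ Ypos, t • x ∈ Ypos)
    (α β : ℝ) (hα : 0 < α) (hβ : 0 < β)
    -- X is approximately α-sum-conormal:
    (hXconormal : ∀ x : X, ∀ ε : ℝ, 0 < ε →
      ∃ a ∈ Xpos, ∃ b ∈ Xpos, x = a - b ∧ ‖a‖ + ‖b‖ < α * ‖x‖ + ε)
    -- Y is β-normal:
    (hYnormal : ∀ x y : Y, x ∈ Ypos → y - x ∈ Ypos → ‖x‖ ≤ β * ‖y‖)
    (T S : X →L[ℝ] Y)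
    (hT : ∀ x ∈ Xpos, T x ∈ Ypos)
    (hTS : ∀ x ∈ Xpos, S x - T x ∈ Ypos) :
    ‖T‖ ≤ α * β * ‖S‖ := by
  have hS0 : (0:ℝ) ≤ β * ‖S‖ := mul_nonneg hβ.le (norm_nonneg S)
  apply ContinuousLinearMap.opNorm_le_bound T
    (mul_nonneg (mul_nonneg hα.le hβ.le) (norm_nonneg S))
  intro x
  -- reduce to: ∀ ε > 0, ‖T x‖ ≤ α*β*‖S‖*‖x‖ + (β*‖S‖+1)*ε with ε → 0
  have key : ∀ ε : ℝ, 0 < ε → ‖T x‖ ≤ α * β * ‖S‖ * ‖x‖ + (β * ‖S‖ + 1) * ε := by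
    intro ε hε
    obtain ⟨a, ha, b, hb, hab, hnorm⟩ := hXconormal x ε hε
    have bound : ∀ c ∈ Xpos, ‖T c‖ ≤ β * ‖S‖ * ‖c‖ := by
      intro c hc
      calc ‖T c‖ ≤ β * ‖S c‖ := hYnormal (T c) (S c) (hT c hc) (hTS c hc)
        _ ≤ β * (‖S‖ * ‖c‖) := by
            exact mul_le_mul_of_nonneg_left (S.le_opNorm c) hβ.le
        _ = β * ‖S‖ * ‖c‖ := (mul_assoc _ _ _).symm
    have hTx : T x = T a - T b := by rw [hab, map_sub]
    calc ‖T x‖ ≤ ‖T a‖ + ‖T b‖ := by rw [hTx]; exact norm_sub_le _ _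
      _ ≤ β * ‖S‖ * ‖a‖ + β * ‖S‖ * ‖b‖ := add_le_add (bound a ha) (bound b hb)
      _ = β * ‖S‖ * (‖a‖ + ‖b‖) := by ring
      _ ≤ β * ‖S‖ * (α * ‖x‖ + ε) := mul_le_mul_of_nonneg_left hnorm.le hS0
      _ = α * β * ‖S‖ * ‖x‖ + β * ‖S‖ * ε := by ring
      _ ≤ α * β * ‖S‖ * ‖x‖ + (β * ‖S‖ + 1) * ε := by nlinarith
  have := le_of_forall_pos_le_add (a := ‖T x‖) (b := α * β * ‖S‖ * ‖x‖) ?_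
  · exact this
  · intro ε hε
    have h1 : 0 < β * ‖S‖ + 1 := by linarith
    have := key (ε / (β * ‖S‖ + 1)) (div_pos hε h1)
    calc ‖T x‖ ≤ α * β * ‖S‖ * ‖x‖ + (β * ‖S‖ + 1) * (ε / (β * ‖S‖ + 1)) := this
      _ = α * β * ‖S‖ * ‖x‖ + ε := by rw [mul_div_cancel₀ _ (ne_of_gt h1)]
end

section
/- Let G be a locally compact Hausdorff topological group with a left Haar measure μ, and let ω be a weight on G. Let A be a real Banach algebra, C ≥ 0, and α : G → A →L A a family of bounded linear maps such that the map (r, a) ↦ α_r(a) from G × A to A is continuous and ‖α_r‖ ≤ C for all r ∈ G. Then for all continuous compactly supported f, g : G → A, the twisted convolution f*g, defined by (f*g)(s) := ∫_G f(r)·α_r(g(r⁻¹s)) dμ(r), satisfies ∫_G ‖(f*g)(s)‖ ω(s) dμ(s) ≤ C · (∫_G ‖f(r)‖ ω(r) dμ(r)) · (∫_G ‖g(r)‖ ω(r) dμ(r)); that is, ‖f*g‖_{1,ω} ≤ C ‖f‖_{1,ω} ‖g‖_{1,ω}. -/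
/-!
A measurable submultiplicative weight is locally bounded: by Steinhaus' theorem some level set
`E = {ω ≤ n, ω ∘ inv ≤ n}` has positive Haar measure, so `E / E` is a neighbourhood of `1` on
which `ω ≤ n²`, and submultiplicativity carries the bound to finitely many translates covering a
compact set.

The estimate itself is made with lower Lebesgue integrals, where neither measurability of the
convolution nor integrability is needed: `‖(f * g) s‖ ≤ C ∫ ‖f r‖ ‖g (r⁻¹ s)‖ dr`, Tonelli on the
compact supports (Haar measure need not be s-finite), `ω s ≤ ω r ω (r⁻¹ s)` and left invariance
give `C ‖f‖_{1,ω} ‖g‖_{1,ω}`. Local boundedness makes the right side finite, so the bound passes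
to the Bochner integrals.
-/

open MeasureTheory Set Topology
open scoped ENNReal Pointwise

section Weight

variable {G : Type*} [Group G] [TopologicalSpace G] [IsTopologicalGroup G] {ω : G → ℝ}

theorem IsCompact.bddAbove_image_of_submul {K V : Set G} (hK : IsCompact K)
    (hω_nonneg : ∀ s, 0 ≤ ω s) (hω_submul : ∀ s t, ω (s * t) ≤ ω s * ω t)
    (hV : V ∈ 𝓝 (1 : G)) (hωV : BddAbove (ω '' V)) : BddAbove (ω '' K) := by
  obtain ⟨M, hM⟩ := hωV
  obtain ⟨t, -, hKt⟩ := hK.elim_nhds_subcover (fun x => x • V) fun x _ => by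
    simpa using smul_mem_nhds_smul x hV
  refine ⟨(∑ x ∈ t, ω x) * M, ?_⟩
  rintro _ ⟨y, hy, rfl⟩
  obtain ⟨x, hxt, v, hv, rfl⟩ : ∃ x ∈ t, ∃ v ∈ V, x • v = y := by
    simpa [mem_smul_set] using hKt hy
  calc ω (x * v) ≤ ω x * ω v := hω_submul x v
    _ ≤ (∑ x ∈ t, ω x) * M :=
      mul_le_mul (Finset.single_le_sum (fun i _ => hω_nonneg i) hxt) (hM ⟨v, hv, rfl⟩)
        (hω_nonneg v) (Finset.sum_nonneg fun i _ => hω_nonneg i)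

variable [LocallyCompactSpace G] [MeasurableSpace G] [BorelSpace G]

theorem exists_mem_nhds_one_bddAbove_image_of_submul (hω_meas : Measurable ω)
    (hω_nonneg : ∀ s, 0 ≤ ω s) (hω_submul : ∀ s t, ω (s * t) ≤ ω s * ω t) :
    ∃ V ∈ 𝓝 (1 : G), BddAbove (ω '' V) := by
  obtain ⟨K, hK1, hK, hK_closed⟩ := exists_mem_nhds_isCompact_isClosed (1 : G)
  let E : ℕ → Set G := fun n => K ∩ {x | ω x ≤ n} ∩ {x | ω x⁻¹ ≤ n}
  have hE_meas : ∀ n, MeasurableSet (E n) := fun n =>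
    (hK_closed.measurableSet.inter (measurableSet_le hω_meas measurable_const)).inter
      (measurableSet_le (hω_meas.comp measurable_inv) measurable_const)
  have hE_union : ⋃ n, E n = K := by
    refine Subset.antisymm (iUnion_subset fun n => inter_subset_left.trans inter_subset_left)
      fun x hx => ?_
    obtain ⟨n, hn⟩ := exists_nat_ge (max (ω x) (ω x⁻¹))
    exact mem_iUnion.2 ⟨n, ⟨hx, (le_max_left _ _).trans hn⟩, (le_max_right _ _).trans hn⟩
  obtain ⟨n, hn⟩ : ∃ n, 0 < Measure.haar (E n) :=
    exists_measure_pos_of_not_measure_iUnion_null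
      (by rw [hE_union]; exact (Measure.measure_pos_of_mem_nhds _ hK1).ne')
  have hE_fin : Measure.haar (E n) ≠ ∞ :=
    ne_top_of_le_ne_top hK.measure_lt_top.ne
      (measure_mono (inter_subset_left.trans inter_subset_left))
  refine ⟨E n / E n, Measure.div_mem_nhds_one_of_haar_pos_ne_top _ _ (hE_meas n) hn hE_fin,
    n * n, ?_⟩
  rintro _ ⟨_, ⟨a, ⟨⟨-, ha⟩, -⟩, b, ⟨-, hb⟩, rfl⟩, rfl⟩
  calc ω (a / b) ≤ ω a * ω b⁻¹ := div_eq_mul_inv a b ▸ hω_submul a b⁻¹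
    _ ≤ n * n := mul_le_mul ha hb (hω_nonneg _) n.cast_nonneg

theorem IsCompact.bddAbove_image_of_measurable_submul {K : Set G} (hK : IsCompact K)
    (hω_meas : Measurable ω) (hω_nonneg : ∀ s, 0 ≤ ω s)
    (hω_submul : ∀ s t, ω (s * t) ≤ ω s * ω t) : BddAbove (ω '' K) :=
  let ⟨_, hV, hωV⟩ := exists_mem_nhds_one_bddAbove_image_of_submul hω_meas hω_nonneg hω_submul
  hK.bddAbove_image_of_submul hω_nonneg hω_submul hV hωV

end Weight

theorem lintegral_lintegral_swap_of_support_subset {X Y : Type*} [MeasurableSpace X]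
    [MeasurableSpace Y] {μ : Measure X} {ν : Measure Y} {s : Set X} {t : Set Y}
    (hs : μ s ≠ ∞) (ht : ν t ≠ ∞) {f : X → Y → ℝ≥0∞} (hf : Measurable (Function.uncurry f))
    (hst : Function.support (Function.uncurry f) ⊆ s ×ˢ t) :
    ∫⁻ x, ∫⁻ y, f x y ∂ν ∂μ = ∫⁻ y, ∫⁻ x, f x y ∂μ ∂ν := by
  have : IsFiniteMeasure (μ.restrict s) := isFiniteMeasure_restrict.2 hs
  have : IsFiniteMeasure (ν.restrict t) := isFiniteMeasure_restrict.2 ht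
  have hf_zero : ∀ x y, x ∉ s ∨ y ∉ t → f x y = 0 := fun x y hxy => by
    by_contra h
    exact (not_and_or.2 hxy) (hst (show (x, y) ∈ Function.support (Function.uncurry f) from h))
  have hX : ∀ g : X → ℝ≥0∞, (∀ x ∉ s, g x = 0) → ∫⁻ x in s, g x ∂μ = ∫⁻ x, g x ∂μ :=
    fun g hg => setLIntegral_eq_of_support_subset (Function.support_subset_iff'.2 hg)
  have hY : ∀ g : Y → ℝ≥0∞, (∀ y ∉ t, g y = 0) → ∫⁻ y in t, g y ∂ν = ∫⁻ y, g y ∂ν :=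
    fun g hg => setLIntegral_eq_of_support_subset (Function.support_subset_iff'.2 hg)
  calc ∫⁻ x, ∫⁻ y, f x y ∂ν ∂μ = ∫⁻ x in s, ∫⁻ y in t, f x y ∂ν ∂μ := by
        rw [hX]
        · simp_rw [hY (f _) fun y hy => hf_zero _ y (.inr hy)]
        · intro x hx
          simp [hf_zero x _ (.inl hx)]
    _ = ∫⁻ y in t, ∫⁻ x in s, f x y ∂μ ∂ν := lintegral_lintegral_swap hf.aemeasurable
    _ = ∫⁻ y, ∫⁻ x, f x y ∂μ ∂ν := by
        rw [hY]
        · simp_rw [hX (f · _) fun x hx => hf_zero x _ (.inl hx)]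
        · intro y hy
          simp [hf_zero _ y (.inr hy)]

section Convolution

variable {G : Type*} [Group G] {E F : Type*} [NormedAddCommGroup E] [NormedAddCommGroup F]
  {f : G → E} {g : G → F}

theorem mem_tsupport_mul_tsupport [TopologicalSpace G] {r s : G} (hf : f r ≠ 0)
    (hg : g (r⁻¹ * s) ≠ 0) : s ∈ tsupport f * tsupport g :=
  ⟨r, subset_tsupport f hf, r⁻¹ * s, subset_tsupport g hg, mul_inv_cancel_left r s⟩

variable [MeasurableSpace G] {μ : Measure G} {w : G → ℝ≥0∞}

theorem lintegral_comp_inv_mul_mul_le [MeasurableMul G] [μ.IsMulLeftInvariant]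
    (hw_meas : Measurable w) (hw_submul : ∀ s t, w (s * t) ≤ w s * w t)
    {φ : G → ℝ≥0∞} (hφ : Measurable φ) (r : G) :
    ∫⁻ s, φ (r⁻¹ * s) * w s ∂μ ≤ w r * ∫⁻ s, φ s * w s ∂μ :=
  calc ∫⁻ s, φ (r⁻¹ * s) * w s ∂μ ≤ ∫⁻ s, w r * (φ (r⁻¹ * s) * w (r⁻¹ * s)) ∂μ := by
        refine lintegral_mono fun s => ?_
        calc φ (r⁻¹ * s) * w s ≤ φ (r⁻¹ * s) * (w r * w (r⁻¹ * s)) := by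
              gcongr
              simpa using hw_submul r (r⁻¹ * s)
          _ = w r * (φ (r⁻¹ * s) * w (r⁻¹ * s)) := by ring
    _ = w r * ∫⁻ s, φ (r⁻¹ * s) * w (r⁻¹ * s) ∂μ :=
        lintegral_const_mul _ ((hφ.mul hw_meas).comp (measurable_const_mul r⁻¹))
    _ = w r * ∫⁻ s, φ s * w s ∂μ := by rw [lintegral_mul_left_eq_self (fun s => φ s * w s) r⁻¹]

variable [TopologicalSpace G] [IsTopologicalGroup G] [BorelSpace G]

theorem measurable_enorm_mul_enorm_comp_inv_mul (hf : Continuous f) (hfs : HasCompactSupport f)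
    (hg : Continuous g) (hgs : HasCompactSupport g) :
    Measurable fun p : G × G => ‖f p.2‖ₑ * ‖g (p.2⁻¹ * p.1)‖ₑ := by
  have hcont : Continuous fun p : G × G => ‖f p.2‖ * ‖g (p.2⁻¹ * p.1)‖ := by fun_prop
  have hsupp : HasCompactSupport fun p : G × G => ‖f p.2‖ * ‖g (p.2⁻¹ * p.1)‖ := by
    refine .intro ((hfs.mul hgs).prod hfs) fun p hp => ?_
    by_contra h
    obtain ⟨hfp, hgp⟩ := mul_ne_zero_iff.1 h
    exact hp ⟨mem_tsupport_mul_tsupport (norm_ne_zero_iff.1 hfp) (norm_ne_zero_iff.1 hgp),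
      subset_tsupport f (norm_ne_zero_iff.1 hfp)⟩
  simpa only [enorm_mul, enorm_norm] using
    (hsupp.stronglyMeasurable_of_prod hcont).measurable.enorm

theorem lintegral_lintegral_enorm_mul_enorm_comp_inv_mul_le [μ.IsMulLeftInvariant]
    [IsFiniteMeasureOnCompacts μ] (hf : Continuous f) (hfs : HasCompactSupport f)
    (hg : Continuous g) (hgs : HasCompactSupport g)
    (hw_meas : Measurable w) (hw_submul : ∀ s t, w (s * t) ≤ w s * w t) :
    ∫⁻ s, (∫⁻ r, ‖f r‖ₑ * ‖g (r⁻¹ * s)‖ₑ ∂μ) * w s ∂μ ≤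
      (∫⁻ r, ‖f r‖ₑ * w r ∂μ) * ∫⁻ s, ‖g s‖ₑ * w s ∂μ := by
  have hkernel := measurable_enorm_mul_enorm_comp_inv_mul hf hfs hg hgs
  have hsupp : Function.support (Function.uncurry fun s r => ‖f r‖ₑ * ‖g (r⁻¹ * s)‖ₑ * w s) ⊆
      (tsupport f * tsupport g) ×ˢ tsupport f := fun ⟨s, r⟩ h => by
    simp only [Function.mem_support, Function.uncurry_apply_pair, mul_ne_zero_iff,
      enorm_ne_zero] at h
    exact ⟨mem_tsupport_mul_tsupport h.1.1 h.1.2, subset_tsupport f h.1.1⟩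
  calc ∫⁻ s, (∫⁻ r, ‖f r‖ₑ * ‖g (r⁻¹ * s)‖ₑ ∂μ) * w s ∂μ
      = ∫⁻ s, ∫⁻ r, ‖f r‖ₑ * ‖g (r⁻¹ * s)‖ₑ * w s ∂μ ∂μ := by
        refine lintegral_congr fun s => (lintegral_mul_const _ ?_).symm
        exact hkernel.comp (measurable_const.prodMk measurable_id)
    _ = ∫⁻ r, ∫⁻ s, ‖f r‖ₑ * ‖g (r⁻¹ * s)‖ₑ * w s ∂μ ∂μ :=
        lintegral_lintegral_swap_of_support_subset (hfs.mul hgs).measure_lt_top.ne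
          hfs.measure_lt_top.ne (hkernel.mul (hw_meas.comp measurable_fst)) hsupp
    _ ≤ ∫⁻ r, ‖f r‖ₑ * (w r * ∫⁻ s, ‖g s‖ₑ * w s ∂μ) ∂μ := by
        refine lintegral_mono fun r => ?_
        simp_rw [mul_assoc, lintegral_const_mul' _ _ enorm_ne_top]
        gcongr
        exact lintegral_comp_inv_mul_mul_le hw_meas hw_submul hg.enorm.measurable r
    _ = (∫⁻ r, ‖f r‖ₑ * w r ∂μ) * ∫⁻ s, ‖g s‖ₑ * w s ∂μ := by
        simp_rw [← mul_assoc]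
        exact lintegral_mul_const _ (hf.enorm.measurable.mul hw_meas)

end Convolution

section Integrals

variable {X E : Type*} [MeasurableSpace X] {μ : Measure X} [NormedAddCommGroup E]

theorem enorm_integral_mul_apply_le {A : Type*} [NormedRing A] [NormedSpace ℝ A] {C : ℝ}
    {α : X → A →L[ℝ] A} (hα : ∀ r, ‖α r‖ ≤ C) (f u : X → A) :
    ‖∫ r, f r * α r (u r) ∂μ‖ₑ ≤ ENNReal.ofReal C * ∫⁻ r, ‖f r‖ₑ * ‖u r‖ₑ ∂μ := by
  rw [← lintegral_const_mul' _ _ ENNReal.ofReal_ne_top]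
  refine (enorm_integral_le_lintegral_enorm _).trans (lintegral_mono fun r => ?_)
  have hle : ‖f r * α r (u r)‖ ≤ C * (‖f r‖ * ‖u r‖) :=
    calc ‖f r * α r (u r)‖ ≤ ‖f r‖ * (‖α r‖ * ‖u r‖) :=
          (norm_mul_le _ _).trans (by gcongr; exact (α r).le_opNorm _)
      _ ≤ ‖f r‖ * (C * ‖u r‖) := by gcongr; exact hα r
      _ = C * (‖f r‖ * ‖u r‖) := by ring
  simpa only [← ofReal_norm, ENNReal.ofReal_mul' (mul_nonneg (norm_nonneg _) (norm_nonneg _)),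
    ENNReal.ofReal_mul (norm_nonneg _)] using ENNReal.ofReal_le_ofReal hle

theorem integral_norm_mul_le_toReal_lintegral {ω : X → ℝ} (hω_nonneg : ∀ x, 0 ≤ ω x)
    (f : X → E) :
    ∫ x, ‖f x‖ * ω x ∂μ ≤ (∫⁻ x, ‖f x‖ₑ * ENNReal.ofReal (ω x) ∂μ).toReal := by
  refine (Real.le_norm_self _).trans ((norm_integral_le_lintegral_norm _).trans_eq ?_)
  simp_rw [Real.norm_eq_abs, abs_of_nonneg (mul_nonneg (norm_nonneg _) (hω_nonneg _)),
    ENNReal.ofReal_mul (norm_nonneg _), ofReal_norm]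

theorem integral_norm_mul_eq_toReal_lintegral {ω : X → ℝ} (hω_meas : Measurable ω)
    (hω_nonneg : ∀ x, 0 ≤ ω x) {f : X → E} (hf : AEStronglyMeasurable f μ) :
    ∫ x, ‖f x‖ * ω x ∂μ = (∫⁻ x, ‖f x‖ₑ * ENNReal.ofReal (ω x) ∂μ).toReal := by
  rw [integral_eq_lintegral_of_nonneg_ae (.of_forall fun x => mul_nonneg (norm_nonneg _)
    (hω_nonneg x)) (hf.norm.mul hω_meas.aestronglyMeasurable)]
  simp_rw [ENNReal.ofReal_mul (norm_nonneg _), ofReal_norm]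

theorem HasCompactSupport.lintegral_enorm_mul_ofReal_lt_top [TopologicalSpace X]
    [IsFiniteMeasureOnCompacts μ] {f : X → E} (hf : Continuous f) (hfs : HasCompactSupport f)
    {ω : X → ℝ} (hω : BddAbove (ω '' tsupport f)) :
    ∫⁻ x, ‖f x‖ₑ * ENNReal.ofReal (ω x) ∂μ < ∞ := by
  obtain ⟨B, hB⟩ := hf.bounded_above_of_compact_support hfs
  obtain ⟨M, hM⟩ := hω
  have hsupp : Function.support (fun x => ‖f x‖ₑ * ENNReal.ofReal (ω x)) ⊆ tsupport f :=
    fun x hx => subset_tsupport f (enorm_ne_zero.1 (left_ne_zero_of_mul hx))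
  calc ∫⁻ x, ‖f x‖ₑ * ENNReal.ofReal (ω x) ∂μ
      = ∫⁻ x in tsupport f, ‖f x‖ₑ * ENNReal.ofReal (ω x) ∂μ :=
        (setLIntegral_eq_of_support_subset hsupp).symm
    _ ≤ ∫⁻ _ in tsupport f, ENNReal.ofReal B * ENNReal.ofReal M ∂μ :=
        setLIntegral_mono measurable_const fun x hx => by
          rw [← ofReal_norm]
          gcongr
          exacts [hB x, hM ⟨x, hx, rfl⟩]
    _ = ENNReal.ofReal B * ENNReal.ofReal M * μ (tsupport f) := setLIntegral_const _ _
    _ < ∞ := ENNReal.mul_lt_top (by finiteness) hfs.measure_lt_top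

end Integrals

theorem stmt11_general
    {G : Type*} [Group G] [TopologicalSpace G] [IsTopologicalGroup G]
    [LocallyCompactSpace G]
    [MeasurableSpace G] [BorelSpace G]
    (μ : Measure G) [μ.IsHaarMeasure]
    (ω : G → ℝ) (hω_meas : Measurable ω) (hω_nonneg : ∀ s : G, 0 ≤ ω s)
    (hω_submul : ∀ s t : G, ω (s * t) ≤ ω s * ω t)
    {A : Type*} [NormedRing A] [NormedAlgebra ℝ A]
    (C : ℝ) (hC : 0 ≤ C)
    (α : G → A →L[ℝ] A)
    (hα_bdd : ∀ r : G, ‖α r‖ ≤ C)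
    (f g : G → A)
    (hf_cont : Continuous f) (hf_supp : HasCompactSupport f)
    (hg_cont : Continuous g) (hg_supp : HasCompactSupport g) :
    (∫ s, ‖∫ r, f r * α r (g (r⁻¹ * s)) ∂μ‖ * ω s ∂μ) ≤
      C * (∫ r, ‖f r‖ * ω r ∂μ) * (∫ r, ‖g r‖ * ω r ∂μ) := by
  set w : G → ℝ≥0∞ := fun s => ENNReal.ofReal (ω s)
  have hw_submul : ∀ s t, w (s * t) ≤ w s * w t := fun s t => by
    simpa only [w, ENNReal.ofReal_mul (hω_nonneg s)] using
      ENNReal.ofReal_le_ofReal (hω_submul s t)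
  have hf_fin : ∫⁻ r, ‖f r‖ₑ * w r ∂μ < ∞ := hf_supp.lintegral_enorm_mul_ofReal_lt_top hf_cont
    (hf_supp.bddAbove_image_of_measurable_submul hω_meas hω_nonneg hω_submul)
  have hg_fin : ∫⁻ r, ‖g r‖ₑ * w r ∂μ < ∞ := hg_supp.lintegral_enorm_mul_ofReal_lt_top hg_cont
    (hg_supp.bddAbove_image_of_measurable_submul hω_meas hω_nonneg hω_submul)
  have key : ∫⁻ s, ‖∫ r, f r * α r (g (r⁻¹ * s)) ∂μ‖ₑ * w s ∂μ ≤
      ENNReal.ofReal C * ((∫⁻ r, ‖f r‖ₑ * w r ∂μ) * ∫⁻ r, ‖g r‖ₑ * w r ∂μ) :=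
    calc _ ≤ ∫⁻ s, ENNReal.ofReal C * ((∫⁻ r, ‖f r‖ₑ * ‖g (r⁻¹ * s)‖ₑ ∂μ) * w s) ∂μ :=
          lintegral_mono fun s => by
            rw [← mul_assoc]; gcongr; exact enorm_integral_mul_apply_le hα_bdd _ _
      _ ≤ _ := by
          rw [lintegral_const_mul' _ _ ENNReal.ofReal_ne_top]
          gcongr
          exact lintegral_lintegral_enorm_mul_enorm_comp_inv_mul_le hf_cont hf_supp hg_cont
            hg_supp hω_meas.ennreal_ofReal hw_submul
  calc _ ≤ (∫⁻ s, ‖∫ r, f r * α r (g (r⁻¹ * s)) ∂μ‖ₑ * w s ∂μ).toReal :=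
        integral_norm_mul_le_toReal_lintegral hω_nonneg _
    _ ≤ (ENNReal.ofReal C * ((∫⁻ r, ‖f r‖ₑ * w r ∂μ) * ∫⁻ r, ‖g r‖ₑ * w r ∂μ)).toReal :=
        ENNReal.toReal_mono
          (ENNReal.mul_ne_top ENNReal.ofReal_ne_top (ENNReal.mul_ne_top hf_fin.ne hg_fin.ne)) key
    _ = _ := by
        rw [integral_norm_mul_eq_toReal_lintegral hω_meas hω_nonneg
            (hf_cont.stronglyMeasurable_of_hasCompactSupport hf_supp).aestronglyMeasurable,
          integral_norm_mul_eq_toReal_lintegral hω_meas hω_nonneg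
            (hg_cont.stronglyMeasurable_of_hasCompactSupport hg_supp).aestronglyMeasurable,
          ENNReal.toReal_mul, ENNReal.toReal_mul, ENNReal.toReal_ofReal hC, mul_assoc]

/-- Let `G` be a locally compact Hausdorff group with left Haar
measure `μ` and `ω` a weight on `G` (non-zero, Borel measurable, nonnegative,
submultiplicative). Let `A` be a real Banach algebra and `α : G → A →L A` a
family of bounded linear maps with `(r, a) ↦ α r a` continuous and `‖α r‖ ≤ C`.
Then for continuous compactly supported `f, g : G → A`, the twisted convolution
satisfies `‖f*g‖_{1,ω} ≤ C * ‖f‖_{1,ω} * ‖g‖_{1,ω}`. -/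
theorem stmt11
    {G : Type*} [Group G] [TopologicalSpace G] [IsTopologicalGroup G]
    [LocallyCompactSpace G] [T2Space G]
    [MeasurableSpace G] [BorelSpace G]
    (μ : Measure G) [μ.IsHaarMeasure]
    (ω : G → ℝ) (hω_meas : Measurable ω) (hω_nonneg : ∀ s : G, 0 ≤ ω s)
    (hω_ne : ω ≠ 0)
    (hω_submul : ∀ s t : G, ω (s * t) ≤ ω s * ω t)
    {A : Type*} [NormedRing A] [NormedAlgebra ℝ A] [CompleteSpace A]
    (C : ℝ) (hC : 0 ≤ C)
    (α : G → A →L[ℝ] A)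
    (hα_cont : Continuous fun p : G × A => α p.1 p.2)
    (hα_bdd : ∀ r : G, ‖α r‖ ≤ C)
    (f g : G → A)
    (hf_cont : Continuous f) (hf_supp : HasCompactSupport f)
    (hg_cont : Continuous g) (hg_supp : HasCompactSupport g) :
    (∫ s, ‖∫ r, f r * α r (g (r⁻¹ * s)) ∂μ‖ * ω s ∂μ) ≤
      C * (∫ r, ‖f r‖ * ω r ∂μ) * (∫ r, ‖g r‖ * ω r ∂μ) :=
  stmt11_general μ ω hω_meas hω_nonneg hω_submul C hC α hα_bdd f g hf_cont hf_supp hg_cont hg_supp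
end

section
/- Let G be a locally compact Hausdorff topological group with a left Haar measure μ, ω a weight on G, and ν the measure with density ω with respect to μ (ν = ω dμ). Let X be a pre-ordered Banach space whose closed cone X₊ is generating in X. Then the cone of ν-a.e. X₊-valued integrable functions is generating in the Bochner space L¹(ν, X): there exists a constant α > 0 such that for every Bochner ν-integrable f : G → X there exist Bochner ν-integrable f⁺, f⁻ : G → X with f⁺(s) ∈ X₊ and f⁻(s) ∈ X₊ for all s ∈ G, f(s) = f⁺(s) − f⁻(s) for all s ∈ G, and ∫‖f⁺‖ dν ≤ α ∫‖f‖ dν and ∫‖f⁻‖ dν ≤ α ∫‖f‖ dν. -/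
/-!
By Baire's theorem, for a generating cone `K` in a Banach space some closure of
`{a - b | a, b ∈ K, ‖a‖, ‖b‖ ≤ n}` has interior, so every `z` is approximated by such differences
at scale `c‖z‖`; the iteration from the proof of the open mapping theorem then makes the
approximation exact with constant `2c` when `K` is closed (Andô–Klee). In `L¹(ν, X)` the a.e.
`K`-valued functions form a closed cone, and applying a bounded decomposition of `X` pointwise to
simple functions, which are dense, approximates every class; the same iteration decomposes it
exactly. A decomposition valid almost everywhere is then repaired on a null set.
-/

open Filter Metric MeasureTheory Topology
open scoped Pointwise

section ConeBall

variable {E S : Type*} [NormedAddCommGroup E] [SetLike S E]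

def coneBall (K : S) (t : ℝ) : Set E := {a | a ∈ K ∧ ‖a‖ ≤ t}

theorem mem_coneBall {K : S} {t : ℝ} {a : E} : a ∈ coneBall K t ↔ a ∈ K ∧ ‖a‖ ≤ t := Iff.rfl

theorem coneBall_mono (K : S) {s t : ℝ} (hst : s ≤ t) : coneBall K s ⊆ coneBall K t :=
  fun _ ha => ⟨ha.1, ha.2.trans hst⟩

theorem coneBall_sub_mono (K : S) {s t : ℝ} (hst : s ≤ t) :
    coneBall K s - coneBall K s ⊆ coneBall K t - coneBall K t :=
  Set.sub_subset_sub (coneBall_mono K hst) (coneBall_mono K hst)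

theorem zero_mem_coneBall_sub [AddSubmonoidClass S E] (K : S) {t : ℝ} (ht : 0 ≤ t) :
    (0 : E) ∈ coneBall K t - coneBall K t :=
  ⟨0, mem_coneBall.2 ⟨zero_mem K, by simpa⟩, 0, mem_coneBall.2 ⟨zero_mem K, by simpa⟩,
    sub_zero 0⟩

theorem coneBall_sub_sub_subset [AddSubmonoidClass S E] (K : S) (s t : ℝ) :
    (coneBall K s - coneBall K s) - (coneBall K t - coneBall K t) ⊆
      coneBall K (s + t) - coneBall K (s + t) := by
  rintro _ ⟨_, ⟨a, ha, b, hb, rfl⟩, _, ⟨a', ha', b', hb', rfl⟩, rfl⟩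
  rw [mem_coneBall] at ha hb ha' hb'
  refine ⟨a + b', mem_coneBall.2 ⟨add_mem ha.1 hb'.1, ?_⟩,
    b + a', mem_coneBall.2 ⟨add_mem hb.1 ha'.1, ?_⟩, by dsimp only; abel⟩
  · exact (norm_add_le _ _).trans (add_le_add ha.2 hb'.2)
  · exact (norm_add_le _ _).trans (add_le_add hb.2 ha'.2)

theorem PointedCone.smul_coneBall_sub_subset [NormedSpace ℝ E] (K : PointedCone ℝ E)
    {r : ℝ} (hr : 0 ≤ r) (t : ℝ) :
    r • (coneBall K t - coneBall K t) ⊆ coneBall K (r * t) - coneBall K (r * t) := by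
  rintro _ ⟨_, ⟨a, ha, b, hb, rfl⟩, rfl⟩
  rw [mem_coneBall] at ha hb
  have hscale {x : E} (hx : x ∈ K ∧ ‖x‖ ≤ t) : r • x ∈ coneBall K (r * t) := by
    refine mem_coneBall.2 ⟨PointedCone.smul_mem K hr hx.1, ?_⟩
    rw [norm_smul, Real.norm_of_nonneg hr]
    exact mul_le_mul_of_nonneg_left hx.2 hr
  exact ⟨r • a, hscale ha, r • b, hscale hb, (smul_sub r a b).symm⟩

end ConeBall

section Decomposition

variable {E : Type*} [NormedAddCommGroup E] [CompleteSpace E]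

theorem PointedCone.exists_pos_forall_mem_closure_coneBall_sub [NormedSpace ℝ E]
    (K : PointedCone ℝ E) (hgen : ∀ x, ∃ a ∈ K, ∃ b ∈ K, x = a - b) :
    ∃ c > 0, ∀ z : E, z ∈ closure (coneBall K (c * ‖z‖) - coneBall K (c * ‖z‖)) := by
  have hcover : ⋃ n : ℕ, closure (coneBall K n - coneBall K n) = Set.univ := by
    refine Set.eq_univ_of_forall fun x => ?_
    obtain ⟨a, ha, b, hb, rfl⟩ := hgen x
    obtain ⟨n, hn⟩ := exists_nat_ge (max ‖a‖ ‖b‖)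
    exact Set.mem_iUnion.2 ⟨n, subset_closure
      ⟨a, ⟨ha, (le_max_left _ _).trans hn⟩, b, ⟨hb, (le_max_right _ _).trans hn⟩, rfl⟩⟩
  obtain ⟨n, y, hy⟩ := nonempty_interior_of_iUnion_of_closed (fun _ => isClosed_closure) hcover
  have hnhds : closure (coneBall K (n + n) - coneBall K (n + n)) ∈ 𝓝 (0 : E) := by
    have hy' : closure (coneBall K n - coneBall K n) ∈ 𝓝 (y + 0) := by
      rwa [add_zero, ← mem_interior_iff_mem_nhds]
    filter_upwards [(continuous_const_add y).continuousAt.preimage_mem_nhds hy'] with w hw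
    have hdiff := map_mem_closure₂ continuous_sub hw (interior_subset hy)
      fun a ha b hb => Set.sub_mem_sub ha hb
    rw [add_sub_cancel_left] at hdiff
    exact closure_mono (coneBall_sub_sub_subset K n n) hdiff
  obtain ⟨r, hr, hball⟩ := Metric.mem_nhds_iff.1 hnhds
  -- Rescaling `ball 0 r` to radius `2‖z‖` gives the constant `4n / r`; `n + 1` keeps it positive.
  refine ⟨4 * (n + 1) / r, by positivity, fun z => ?_⟩
  rcases eq_or_ne z 0 with rfl | hz
  · simpa using subset_closure (zero_mem_coneBall_sub K le_rfl)
  set t := 2 * ‖z‖ / r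
  have ht : 0 < t := by positivity
  have hw : t⁻¹ • z ∈ ball (0 : E) r := by
    rw [mem_ball_zero_iff, norm_smul, norm_inv, Real.norm_of_nonneg ht.le, inv_mul_lt_iff₀ ht,
      div_mul_cancel₀ _ hr.ne']
    linarith [norm_pos_iff.2 hz]
  have hz_mem := Set.smul_mem_smul_set (a := t) (hball hw)
  rw [smul_inv_smul₀ ht.ne'] at hz_mem
  refine closure_mono ((K.smul_coneBall_sub_subset ht.le _).trans (coneBall_sub_mono K ?_))
    (smul_closure_subset t _ hz_mem)
  rw [show t * (n + n) = 4 * n / r * ‖z‖ by ring]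
  gcongr
  linarith

theorem mem_coneBall_sub_of_forall_mem_closure {S : Type*} [SetLike S E] [AddSubmonoidClass S E]
    {K : S} (hK : IsClosed (K : Set E)) {c : ℝ} (hc : 0 ≤ c)
    (h : ∀ z : E, z ∈ closure (coneBall K (c * ‖z‖) - coneBall K (c * ‖z‖))) (x : E) :
    x ∈ coneBall K (2 * c * ‖x‖) - coneBall K (2 * c * ‖x‖) := by
  have hstep : ∀ z : E, ∃ a ∈ K, ∃ b ∈ K,
      ‖a‖ ≤ c * ‖z‖ ∧ ‖b‖ ≤ c * ‖z‖ ∧ ‖z - (a - b)‖ ≤ ‖z‖ / 2 := by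
    intro z
    rcases eq_or_ne z 0 with rfl | hz
    · exact ⟨0, zero_mem K, 0, zero_mem K, by simp, by simp, by simp⟩
    obtain ⟨_, ⟨a, ha, b, hb, rfl⟩, hdist⟩ :=
      Metric.mem_closure_iff.1 (h z) (‖z‖ / 2) (by positivity)
    exact ⟨a, ha.1, b, hb.1, ha.2, hb.2, (dist_eq_norm z _ ▸ hdist).le⟩
  choose a ha b hb hna hnb hab using hstep
  set z : ℕ → E := fun k => (fun w => w - (a w - b w))^[k] x
  have hz_succ (k : ℕ) : z (k + 1) = z k - (a (z k) - b (z k)) :=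
    Function.iterate_succ_apply' _ _ _
  have hz_norm (k : ℕ) : ‖z k‖ ≤ ‖x‖ / 2 ^ k := by
    induction k with
    | zero => simp [z]
    | succ k ih =>
      rw [hz_succ, pow_succ, ← div_div]
      exact (hab _).trans (by linarith)
  have hgeom := hasSum_geometric_two' (2 * c * ‖x‖)
  have hbound {u : E → E} (hu : ∀ w, ‖u w‖ ≤ c * ‖w‖) (k : ℕ) :
      ‖u (z k)‖ ≤ 2 * c * ‖x‖ / 2 / 2 ^ k :=
    calc ‖u (z k)‖ ≤ c * ‖z k‖ := hu _
      _ ≤ c * (‖x‖ / 2 ^ k) := mul_le_mul_of_nonneg_left (hz_norm k) hc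
      _ = 2 * c * ‖x‖ / 2 / 2 ^ k := by ring
  have hA : Summable fun k => a (z k) := .of_norm_bounded hgeom.summable (hbound hna)
  have hB : Summable fun k => b (z k) := .of_norm_bounded hgeom.summable (hbound hnb)
  have hsum : HasSum (fun k => a (z k) - b (z k)) x := by
    rw [(hA.sub hB).hasSum_iff_tendsto_nat]
    have hpartial (n : ℕ) : ∑ k ∈ Finset.range n, (a (z k) - b (z k)) = x - z n := by
      refine (Finset.sum_congr rfl fun k _ => ?_).trans (Finset.sum_range_sub' z n)
      rw [hz_succ, sub_sub_cancel]
    have hz_lim : Tendsto z atTop (𝓝 0) := squeeze_zero_norm hz_norm <| by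
      simpa using tendsto_const_nhds.div_atTop (tendsto_pow_atTop_atTop_of_one_lt one_lt_two)
    simpa [hpartial] using tendsto_const_nhds.sub hz_lim
  exact ⟨∑' k, a (z k), ⟨tsum_mem hK fun k => ha _, tsum_of_norm_bounded hgeom (hbound hna)⟩,
    ∑' k, b (z k), ⟨tsum_mem hK fun k => hb _, tsum_of_norm_bounded hgeom (hbound hnb)⟩,
    (hA.hasSum.sub hB.hasSum).unique hsum⟩

end Decomposition

theorem Filter.Eventually.exists_forall_eq_sub {ι E : Type*} [Sub E] {K : Set E}
    (hgen : ∀ x, ∃ a ∈ K, ∃ b ∈ K, x = a - b) {l : Filter ι} {f a b : ι → E}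
    (h : ∀ᶠ i in l, a i ∈ K ∧ b i ∈ K ∧ f i = a i - b i) :
    ∃ fp fm : ι → E, fp =ᶠ[l] a ∧ fm =ᶠ[l] b ∧ ∀ i, fp i ∈ K ∧ fm i ∈ K ∧ f i = fp i - fm i := by
  classical
  choose P hP M hM hPM using hgen
  let good i := a i ∈ K ∧ b i ∈ K ∧ f i = a i - b i
  refine ⟨fun i => if good i then a i else P (f i), fun i => if good i then b i else M (f i),
    h.mono fun i hi => if_pos hi, h.mono fun i hi => if_pos hi, fun i => ?_⟩
  by_cases hi : good i
  · simpa only [if_pos hi] using hi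
  · simpa only [if_neg hi] using ⟨hP _, hM _, hPM _⟩

namespace MeasureTheory.Lp

variable {α E S : Type*} [MeasurableSpace α] {p : ENNReal} {μ : Measure α} [NormedAddCommGroup E]
  [SetLike S E] [AddSubmonoidClass S E]

variable (p μ) in
def aeMemAddSubmonoid (K : S) : AddSubmonoid (Lp E p μ) where
  carrier := {f | ∀ᵐ x ∂μ, f x ∈ K}
  add_mem' {f g} hf hg := by
    filter_upwards [hf, hg, coeFn_add f g] with x hfx hgx hx
    rw [hx]
    exact add_mem hfx hgx
  zero_mem' := by
    filter_upwards [coeFn_zero E p μ] with x hx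
    rw [hx]
    exact zero_mem K

theorem isClosed_aeMemAddSubmonoid [Fact (1 ≤ p)] {K : S} (hK : IsClosed (K : Set E)) :
    IsClosed (aeMemAddSubmonoid p μ K : Set (Lp E p μ)) := by
  refine IsSeqClosed.isClosed fun f g hf hfg => ?_
  obtain ⟨φ, -, hφ⟩ := (tendstoInMeasure_of_tendsto_Lp hfg).exists_seq_tendsto_ae
  filter_upwards [ae_all_iff.2 fun n => hf (φ n), hφ] with x hx hφx
  exact hK.mem_of_tendsto hφx (Eventually.of_forall hx)

theorem mem_closure_coneBall_sub [Fact (1 ≤ p)] (hp : p ≠ ⊤) {K : S} {C : ℝ} (hC : 0 ≤ C)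
    (hdec : ∀ x : E, x ∈ coneBall K (C * ‖x‖) - coneBall K (C * ‖x‖)) (g : Lp E p μ) :
    g ∈ closure (coneBall (aeMemAddSubmonoid p μ K) (2 * C * ‖g‖) -
      coneBall (aeMemAddSubmonoid p μ K) (2 * C * ‖g‖)) := by
  rcases eq_or_ne g 0 with rfl | hg
  · simpa using subset_closure (zero_mem_coneBall_sub (aeMemAddSubmonoid p μ K) le_rfl)
  choose P hP M hM hPM using hdec
  refine Metric.mem_closure_iff.2 fun ε hε => ?_
  obtain ⟨s, hs, hgs⟩ :=
    Metric.mem_closure_iff.1 (Lp.simpleFunc.dense hp g) (min ε ‖g‖) (by positivity)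
  set σ := Lp.simpleFunc.toSimpleFunc ⟨s, hs⟩
  have hσ : σ =ᵐ[μ] s := Lp.simpleFunc.toSimpleFunc_eq_toFun _
  have hs_norm : ‖s‖ ≤ 2 * ‖g‖ := by
    have hsg : ‖s - g‖ < ‖g‖ := by
      rw [← _root_.dist_eq_norm, dist_comm]
      exact hgs.trans_le (min_le_right _ _)
    linarith [norm_le_norm_add_norm_sub' s g]
  -- `P` and `M` need not be measurable, but their composites with a simple function are simple.
  have hlift {Q : E → E} (hQ : ∀ x, Q x ∈ coneBall K (C * ‖x‖)) :
      ∃ A ∈ coneBall (aeMemAddSubmonoid p μ K) (2 * C * ‖g‖), A =ᵐ[μ] Q ∘ σ := by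
    have hmem : MemLp (σ.map Q) p μ := (Lp.simpleFunc.memLp _).of_le_mul
      (σ.map Q).aestronglyMeasurable (ae_of_all _ fun x => (hQ _).2)
    refine ⟨hmem.toLp _, ⟨?_, ?_⟩, hmem.coeFn_toLp⟩
    · filter_upwards [hmem.coeFn_toLp] with x hx
      rw [hx]
      exact (hQ _).1
    · have hA : ‖hmem.toLp _‖ ≤ C * ‖s‖ := norm_le_mul_norm_of_ae_le_mul <| by
        filter_upwards [hmem.coeFn_toLp, hσ] with x hx hσx
        rw [hx, ← hσx]
        exact (hQ _).2
      calc _ ≤ C * ‖s‖ := hA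
        _ ≤ C * (2 * ‖g‖) := mul_le_mul_of_nonneg_left hs_norm hC
        _ = 2 * C * ‖g‖ := by ring
  obtain ⟨A, hA, hAσ⟩ := hlift hP
  obtain ⟨B, hB, hBσ⟩ := hlift hM
  have hAB : A - B = s := Lp.ext <| by
    filter_upwards [coeFn_sub A B, hAσ, hBσ, hσ] with x hx hAx hBx hσx
    rw [hx, Pi.sub_apply, hAx, hBx, ← hσx]
    exact hPM _
  exact ⟨A - B, Set.sub_mem_sub hA hB, hAB ▸ hgs.trans_le (min_le_left _ _)⟩

end MeasureTheory.Lp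

theorem PointedCone.exists_pos_forall_integrable_eq_sub {Ω E : Type*} [MeasurableSpace Ω]
    [NormedAddCommGroup E] [NormedSpace ℝ E] [CompleteSpace E] (ν : Measure Ω)
    (K : PointedCone ℝ E) (hK : IsClosed (K : Set E)) (hgen : ∀ x, ∃ a ∈ K, ∃ b ∈ K, x = a - b) :
    ∃ α > 0, ∀ f : Ω → E, Integrable f ν → ∃ fp fm : Ω → E,
      Integrable fp ν ∧ Integrable fm ν ∧ (∀ s, fp s ∈ K) ∧ (∀ s, fm s ∈ K) ∧
      (∀ s, f s = fp s - fm s) ∧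
      ∫ s, ‖fp s‖ ∂ν ≤ α * ∫ s, ‖f s‖ ∂ν ∧ ∫ s, ‖fm s‖ ∂ν ≤ α * ∫ s, ‖f s‖ ∂ν := by
  obtain ⟨c, hc, happrox⟩ := K.exists_pos_forall_mem_closure_coneBall_sub hgen
  have hL1 (g : Ω →₁[ν] E) :
      g ∈ coneBall (Lp.aeMemAddSubmonoid 1 ν K) (2 * (2 * (2 * c)) * ‖g‖) -
        coneBall (Lp.aeMemAddSubmonoid 1 ν K) (2 * (2 * (2 * c)) * ‖g‖) :=
    mem_coneBall_sub_of_forall_mem_closure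
      (Lp.isClosed_aeMemAddSubmonoid hK) (by positivity)
      (Lp.mem_closure_coneBall_sub ENNReal.one_ne_top (by positivity)
        (mem_coneBall_sub_of_forall_mem_closure hK hc.le happrox)) g
  refine ⟨2 * (2 * (2 * c)), by positivity, fun f hf => ?_⟩
  obtain ⟨A, ⟨hA, hA_norm⟩, B, ⟨hB, hB_norm⟩, hAB⟩ := hL1 (hf.toL1 f)
  have hdiff : ∀ᵐ s ∂ν, A s ∈ K ∧ B s ∈ K ∧ f s = A s - B s := by
    filter_upwards [hA, hB, Lp.coeFn_sub A B, hf.coeFn_toL1] with s hAs hBs hsub hfs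
    rw [← hfs, ← hAB, hsub, Pi.sub_apply]
    exact ⟨hAs, hBs, rfl⟩
  obtain ⟨fp, fm, hfp, hfm, hpos⟩ := hdiff.exists_forall_eq_sub hgen
  have hnorm {g : Ω → E} {G : Ω →₁[ν] E} (h : g =ᵐ[ν] G) : ∫ s, ‖g s‖ ∂ν = ‖G‖ := by
    rw [L1.norm_eq_integral_norm]
    exact integral_congr_ae (h.fun_comp norm)
  refine ⟨fp, fm, (L1.integrable_coeFn A).congr hfp.symm, (L1.integrable_coeFn B).congr hfm.symm,
    fun s => (hpos s).1, fun s => (hpos s).2.1, fun s => (hpos s).2.2, ?_, ?_⟩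
  · rw [hnorm hfp, hnorm hf.coeFn_toL1.symm]
    exact hA_norm
  · rw [hnorm hfm, hnorm hf.coeFn_toL1.symm]
    exact hB_norm

theorem stmt13_general
    {G : Type*}
    [MeasurableSpace G]
    (μ : Measure G)
    (ω : G → ℝ)
    {X : Type*} [NormedAddCommGroup X] [NormedSpace ℝ X] [CompleteSpace X]
    (Xpos : Set X) (hXpos_closed : IsClosed Xpos)
    (hXpos_add : ∀ x ∈ Xpos, ∀ y ∈ Xpos, x + y ∈ Xpos)
    (hXpos_smul : ∀ (t : ℝ), 0 ≤ t → ∀ x ∈ Xpos, t • x ∈ Xpos)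
    (hXgen : ∀ x : X, ∃ a ∈ Xpos, ∃ b ∈ Xpos, x = a - b) :
    ∃ (α : ℝ), 0 < α ∧
      ∀ f : G → X,
        Integrable f (μ.withDensity fun s => ENNReal.ofReal (ω s)) →
        ∃ fp fm : G → X,
          Integrable fp (μ.withDensity fun s => ENNReal.ofReal (ω s)) ∧
          Integrable fm (μ.withDensity fun s => ENNReal.ofReal (ω s)) ∧
          (∀ s : G, fp s ∈ Xpos) ∧ (∀ s : G, fm s ∈ Xpos) ∧
          (∀ s : G, f s = fp s - fm s) ∧
          (∫ s, ‖fp s‖ ∂(μ.withDensity fun s => ENNReal.ofReal (ω s))) ≤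
            α * (∫ s, ‖f s‖ ∂(μ.withDensity fun s => ENNReal.ofReal (ω s))) ∧
          (∫ s, ‖fm s‖ ∂(μ.withDensity fun s => ENNReal.ofReal (ω s))) ≤
            α * (∫ s, ‖f s‖ ∂(μ.withDensity fun s => ENNReal.ofReal (ω s))) := by
  let K : PointedCone ℝ X :=
    { carrier := Xpos
      add_mem' := fun ha hb => hXpos_add _ ha _ hb
      zero_mem' := by
        obtain ⟨a, ha, -⟩ := hXgen 0
        simpa using hXpos_smul 0 le_rfl a ha
      smul_mem' := fun c x hx => hXpos_smul c c.2 x hx }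
  exact K.exists_pos_forall_integrable_eq_sub _ hXpos_closed hXgen

/-- Let `G` be a locally compact Hausdorff group with left Haar
measure `μ`, `ω` a weight on `G`, and `ν = ω dμ`. Let `X` be a pre-ordered Banach
space whose closed cone `Xpos` is generating. Then the cone of a.e. `Xpos`-valued
integrable functions is generating in the Bochner space `L¹(ν, X)`: there exists
`α > 0` such that every Bochner `ν`-integrable `f : G → X` can be written
pointwise as `f = f⁺ - f⁻` with `f⁺, f⁻` `ν`-integrable and `Xpos`-valued, and
`∫‖f⁺‖ dν ≤ α ∫‖f‖ dν`, `∫‖f⁻‖ dν ≤ α ∫‖f‖ dν`. -/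
theorem stmt13
    {G : Type*} [Group G] [TopologicalSpace G] [IsTopologicalGroup G]
    [LocallyCompactSpace G] [T2Space G]
    [MeasurableSpace G] [BorelSpace G]
    (μ : Measure G) [μ.IsHaarMeasure]
    (ω : G → ℝ) (hω_meas : Measurable ω) (hω_nonneg : ∀ s : G, 0 ≤ ω s)
    (hω_ne : ω ≠ 0)
    (hω_submul : ∀ s t : G, ω (s * t) ≤ ω s * ω t)
    {X : Type*} [NormedAddCommGroup X] [NormedSpace ℝ X] [CompleteSpace X]
    (Xpos : Set X) (hXpos_closed : IsClosed Xpos)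
    (hXpos_add : ∀ x ∈ Xpos, ∀ y ∈ Xpos, x + y ∈ Xpos)
    (hXpos_smul : ∀ (t : ℝ), 0 ≤ t → ∀ x ∈ Xpos, t • x ∈ Xpos)
    (hXgen : ∀ x : X, ∃ a ∈ Xpos, ∃ b ∈ Xpos, x = a - b) :
    ∃ (α : ℝ), 0 < α ∧
      ∀ f : G → X,
        Integrable f (μ.withDensity fun s => ENNReal.ofReal (ω s)) →
        ∃ fp fm : G → X,
          Integrable fp (μ.withDensity fun s => ENNReal.ofReal (ω s)) ∧
          Integrable fm (μ.withDensity fun s => ENNReal.ofReal (ω s)) ∧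
          (∀ s : G, fp s ∈ Xpos) ∧ (∀ s : G, fm s ∈ Xpos) ∧
          (∀ s : G, f s = fp s - fm s) ∧
          (∫ s, ‖fp s‖ ∂(μ.withDensity fun s => ENNReal.ofReal (ω s))) ≤
            α * (∫ s, ‖f s‖ ∂(μ.withDensity fun s => ENNReal.ofReal (ω s))) ∧
          (∫ s, ‖fm s‖ ∂(μ.withDensity fun s => ENNReal.ofReal (ω s))) ≤
            α * (∫ s, ‖f s‖ ∂(μ.withDensity fun s => ENNReal.ofReal (ω s))) :=
  stmt13_general μ ω Xpos hXpos_closed hXpos_add hXpos_smul hXgen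
end
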